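/- arXiv:2506.22996 — 9 statements merged into one kernel-verified Lean document; each statement's English description precedes it below -/
import Mathlib

section
/- If Z has the standard normal density φ(x) = (1/√(2π)) e^{−x²/2}, then the weighted varextropy VJ^w(Z) = (1/4)∫ x² φ(x)³ dx − ((1/2)∫ x φ(x)² dx)² equals √3/(72π), and the varextropy VJ(Z) = (1/4)∫ φ(x)³ dx − ((1/2)∫ φ(x)² dx)² equals √3/(24π) − 1/(16π). -/
open MeasureTheory Real Set Filter

lemma integrableOn_sq_mul_exp_aux {b : ℝ} (hb : 0 < b) :
    IntegrableOn (fun x : ℝ => x ^ 2 * Real.exp (-b * x ^ 2)) (Ioi 0) := by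
  have h := integrableOn_rpow_mul_exp_neg_mul_sq hb (s := 2) (by norm_num)
  refine h.congr_fun (fun x hx => ?_) measurableSet_Ioi
  rw [← Real.rpow_natCast x 2]
  norm_num

lemma integral_sq_mul_exp_Ioi_aux {b : ℝ} (hb : 0 < b) :
    ∫ x in Ioi (0:ℝ), x ^ 2 * Real.exp (-b * x ^ 2)
      = (1 / (2 * b)) * (Real.sqrt (π / b) / 2) := by
  set F : ℝ → ℝ := fun x => -(1 / (2 * b)) * (x * Real.exp (-b * x ^ 2)) with hF
  have hderiv : ∀ x : ℝ, HasDerivAt F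
      (x ^ 2 * Real.exp (-b * x ^ 2) - (1 / (2 * b)) * Real.exp (-b * x ^ 2)) x := by
    intro x
    have h1 : HasDerivAt (fun x : ℝ => -b * x ^ 2) (-b * (2 * x)) x := by
      simpa using ((hasDerivAt_pow 2 x).const_mul (-b))
    have h2 : HasDerivAt (fun x : ℝ => Real.exp (-b * x ^ 2))
        (Real.exp (-b * x ^ 2) * (-b * (2 * x))) x := h1.exp
    have h3 : HasDerivAt (fun x : ℝ => x * Real.exp (-b * x ^ 2))
        (1 * Real.exp (-b * x ^ 2) + x * (Real.exp (-b * x ^ 2) * (-b * (2 * x)))) x :=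
      (hasDerivAt_id x).mul h2
    have h4 := h3.const_mul (-(1 / (2 * b)))
    refine h4.congr_deriv ?_
    have hb' : (1 / (2 * b)) * b * 2 = 1 := by field_simp
    linear_combination (x ^ 2 * Real.exp (-b * x ^ 2)) * hb'
  have htend : Tendsto F atTop (nhds 0) := by
    have ho := rpow_mul_exp_neg_mul_sq_isLittleO_exp_neg hb 1
    have h0 : Tendsto (fun x : ℝ => Real.exp (-(1/2) * x)) atTop (nhds 0) := by
      apply Real.tendsto_exp_atBot.comp
      have : Tendsto (fun x : ℝ => -(1/2) * x) atTop atBot := by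
        apply Tendsto.const_mul_atTop_of_neg (by norm_num : (-(1/2):ℝ) < 0) tendsto_id
      exact this
    have h1 : Tendsto (fun x : ℝ => x ^ (1:ℝ) * Real.exp (-b * x ^ 2)) atTop (nhds 0) :=
      ho.tendsto_zero_of_tendsto h0
    have h2 : Tendsto (fun x : ℝ => x * Real.exp (-b * x ^ 2)) atTop (nhds 0) := by
      simpa [Real.rpow_one] using h1
    have h3 := h2.const_mul (-(1 / (2 * b)))
    rw [mul_zero] at h3
    exact h3
  have hint : IntegrableOn
      (fun x : ℝ => x ^ 2 * Real.exp (-b * x ^ 2) - (1 / (2 * b)) * Real.exp (-b * x ^ 2))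
      (Ioi 0) :=
    (integrableOn_sq_mul_exp_aux hb).sub
      (((integrable_exp_neg_mul_sq hb).const_mul _).integrableOn)
  have key := integral_Ioi_of_hasDerivAt_of_tendsto
    (hderiv 0).continuousAt.continuousWithinAt (fun x _ => hderiv x) hint htend
  have hF0 : F 0 = 0 := by simp [hF]
  rw [hF0, sub_zero] at key
  rw [integral_sub (integrableOn_sq_mul_exp_aux hb)
      (((integrable_exp_neg_mul_sq hb).const_mul _).integrableOn)] at key
  rw [integral_const_mul, integral_gaussian_Ioi] at key
  linarith

lemma integral_sq_mul_exp_aux {b : ℝ} (hb : 0 < b) :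
    ∫ x : ℝ, x ^ 2 * Real.exp (-b * x ^ 2) = Real.sqrt (π / b) / (2 * b) := by
  have h1 : ∫ x : ℝ, x ^ 2 * Real.exp (-b * x ^ 2)
      = ∫ x : ℝ, |x| ^ 2 * Real.exp (-b * |x| ^ 2) := by
    congr 1; funext x; rw [sq_abs]
  rw [h1, integral_comp_abs (f := fun x => x ^ 2 * Real.exp (-b * x ^ 2)),
    integral_sq_mul_exp_Ioi_aux hb]
  field_simp

lemma odd_integral_zero_aux :
    ∫ x : ℝ, x * ((1/Real.sqrt (2*Real.pi)) * Real.exp (-x^2/2))^2 = 0 := by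
  set f : ℝ → ℝ := fun x => x * ((1/Real.sqrt (2*Real.pi)) * Real.exp (-x^2/2))^2 with hf
  have h : (fun x : ℝ => f (-x)) = fun x => -(f x) := by
    funext x; simp only [hf, neg_sq]; ring
  have h2 : ∫ x : ℝ, f x = -∫ x : ℝ, f x := by
    conv_lhs => rw [← integral_neg_eq_self f volume]
    rw [h, integral_neg]
  linarith

/-- For the standard normal density `φ(x) = (1/√(2π)) e^(−x²/2)`, the weighted
varextropy equals `√3/(72π)` and the varextropy equals `√3/(24π) − 1/(16π)`. -/
theorem varextropy_std_normal :
    ((1/4 : ℝ) * (∫ x : ℝ, x^2 * ((1/Real.sqrt (2*Real.pi)) * Real.exp (-x^2/2))^3)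
        - ((1/2 : ℝ) * ∫ x : ℝ, x * ((1/Real.sqrt (2*Real.pi)) * Real.exp (-x^2/2))^2)^2
      = Real.sqrt 3 / (72 * Real.pi))
    ∧ ((1/4 : ℝ) * (∫ x : ℝ, ((1/Real.sqrt (2*Real.pi)) * Real.exp (-x^2/2))^3)
        - ((1/2 : ℝ) * ∫ x : ℝ, ((1/Real.sqrt (2*Real.pi)) * Real.exp (-x^2/2))^2)^2
      = Real.sqrt 3 / (24 * Real.pi) - 1/(16 * Real.pi)) := by
  have hπ : 0 < π := Real.pi_pos
  set s : ℝ := Real.sqrt (2 * π) with hs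
  have hs0 : 0 < s := Real.sqrt_pos.mpr (by positivity)
  have hs2 : s ^ 2 = 2 * π := Real.sq_sqrt (by positivity)
  set t : ℝ := Real.sqrt 3 with ht
  have ht0 : 0 < t := Real.sqrt_pos.mpr (by norm_num)
  have ht2 : t ^ 2 = 3 := Real.sq_sqrt (by norm_num)
  set u : ℝ := Real.sqrt π with hu
  have hu0 : 0 < u := Real.sqrt_pos.mpr hπ
  have hu2 : u ^ 2 = π := Real.sq_sqrt hπ.le
  -- √(π / (3/2)) = s / t
  have hsqrt32 : Real.sqrt (π / (3/2)) = s / t := by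
    rw [show π / (3/2) = (2 * π) / 3 by ring, Real.sqrt_div (by positivity)]
  -- pointwise rewrites
  have hcube : ∀ x : ℝ, ((1/s) * Real.exp (-x^2/2))^3
      = (1/s)^3 * Real.exp (-(3/2) * x ^ 2) := by
    intro x
    rw [mul_pow, ← Real.exp_nat_mul]
    congr 1
    push_cast; ring
  have hsq : ∀ x : ℝ, ((1/s) * Real.exp (-x^2/2))^2
      = (1/s)^2 * Real.exp (-1 * x ^ 2) := by
    intro x
    rw [mul_pow, ← Real.exp_nat_mul]
    congr 1
    push_cast; ring
  constructor
  · -- weighted varextropy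
    rw [odd_integral_zero_aux]
    have h1 : ∫ x : ℝ, x^2 * ((1/s) * Real.exp (-x^2/2))^3
        = (1/s)^3 * ∫ x : ℝ, x ^ 2 * Real.exp (-(3/2) * x ^ 2) := by
      rw [← integral_const_mul]
      congr 1; funext x
      rw [hcube x]; ring
    rw [h1, integral_sq_mul_exp_aux (by norm_num : (0:ℝ) < 3/2), hsqrt32]
    field_simp
    linear_combination (-48*t^2) * hs2 + (-96*π) * ht2
  · have h1 : ∫ x : ℝ, ((1/s) * Real.exp (-x^2/2))^3
        = (1/s)^3 * ∫ x : ℝ, Real.exp (-(3/2) * x ^ 2) := by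
      rw [← integral_const_mul]
      congr 1; funext x
      exact hcube x
    have h2 : ∫ x : ℝ, ((1/s) * Real.exp (-x^2/2))^2
        = (1/s)^2 * ∫ x : ℝ, Real.exp (-1 * x ^ 2) := by
      rw [← integral_const_mul]
      congr 1; funext x
      exact hsq x
    rw [h1, h2, integral_gaussian, integral_gaussian, hsqrt32,
      show π / 1 = π by ring, ← hu]
    field_simp
    linear_combination (1536*π - 768*(s^2+2*π) + 384*t*(s^2+2*π)) * hs2
      + (-256*s^4) * ht2 + (-1536*π*t) * hu2
end

section
/- Let X be a nonnegative absolutely continuous random variable with density f and finite support [a,b] with 0 < a < b. Then the weighted varextropy VJ^w(X) = (1/4)Var[X f(X)] equals 0 if and only if f is (a.e.) the reciprocal density f(x) = 1/(x (ln b − ln a)) on (a,b). -/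
open MeasureTheory

/-- Characterization of the reciprocal distribution: for a nonnegative random
variable with density `f` supported on `(a,b)`, `0 < a < b`, and positive there,
the weighted varextropy `VJʷ(X) = (1/4)Var[X f(X)]` vanishes if and only if `f`
is (Lebesgue-a.e. on `(a,b)`) the reciprocal density `x ↦ 1/(x(ln b − ln a))`. -/
theorem weighted_varextropy_eq_zero_iff_reciprocal
    (a b : ℝ) (ha : 0 < a) (hab : a < b)
    (f : ℝ → ℝ) (hmeas : Measurable f)
    (hsupp : ∀ x, x ∉ Set.Ioo a b → f x = 0)
    (hpos : ∀ x ∈ Set.Ioo a b, 0 < f x)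
    (hf1 : (∫ x : ℝ, f x) = 1)
    (hint2 : Integrable (fun x : ℝ => (x * f x)^2 * f x))
    (hint1 : Integrable (fun x : ℝ => (x * f x) * f x)) :
    (1/4 : ℝ) * ((∫ x : ℝ, (x * f x)^2 * f x) - (∫ x : ℝ, (x * f x) * f x)^2) = 0
      ↔ (∀ᵐ x ∂(volume.restrict (Set.Ioo a b)),
          f x = 1 / (x * (Real.log b - Real.log a))) := by
  set L := Real.log b - Real.log a with hLdef
  have hb : 0 < b := ha.trans hab
  have hL : 0 < L := sub_pos.mpr (Real.log_lt_log ha hab)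
  have hfnn : ∀ x, 0 ≤ f x := by
    intro x
    by_cases hx : x ∈ Set.Ioo a b
    · exact (hpos x hx).le
    · rw [hsupp x hx]
  have hintf : Integrable f := by
    by_contra h
    rw [integral_undef h] at hf1
    exact one_ne_zero hf1.symm
  have hIoo : MeasurableSet (Set.Ioo a b) := measurableSet_Ioo
  have hset : ∀ (g : ℝ → ℝ), (∀ x, x ∉ Set.Ioo a b → g x = 0) →
      (∫ x in Set.Ioo a b, g x) = ∫ x, g x := fun g hg =>
    setIntegral_eq_integral_of_forall_compl_eq_zero hg
  have hfset : (∫ x in Set.Ioo a b, f x) = 1 := by rw [hset f hsupp, hf1]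
  have hIoox : (∫ x in Set.Ioo a b, x⁻¹) = L := by
    rw [← integral_Ioc_eq_integral_Ioo, ← intervalIntegral.integral_of_le hab.le,
      integral_inv_of_pos ha hb, Real.log_div (ne_of_gt hb) (ne_of_gt ha)]
  constructor
  · intro h
    set m := ∫ x : ℝ, (x * f x) * f x with hm
    have h4 : (∫ x : ℝ, (x * f x)^2 * f x) - m^2 = 0 := by linarith
    have hA : Integrable (fun x : ℝ => (x * f x)^2 * f x - (2*m) * ((x * f x) * f x)) :=
      hint2.sub (hint1.const_mul (2*m))
    have hB : Integrable (fun x : ℝ => m^2 * f x) := hintf.const_mul (m^2)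
    set F : ℝ → ℝ := fun x => (x * f x - m)^2 * f x with hF
    have hFdef : ∀ x, F x = (x * f x)^2 * f x - (2*m) * ((x * f x) * f x)
        + m^2 * f x := by intro x; simp only [hF]; ring
    have hFint : Integrable F := by
      exact (hA.add hB).congr (Filter.Eventually.of_forall fun x => (hFdef x).symm)
    have hFI : (∫ x, F x) = 0 := by
      have : (∫ x, F x) = ∫ x, ((x * f x)^2 * f x - (2*m) * ((x * f x) * f x)
          + m^2 * f x) := integral_congr_ae (Filter.Eventually.of_forall hFdef)
      rw [this, integral_add hA hB,
        integral_sub hint2 (hint1.const_mul (2*m)), integral_const_mul,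
        integral_const_mul, hf1, ← hm]
      nlinarith [h4]
    have hFnn : ∀ x, 0 ≤ F x := fun x => mul_nonneg (sq_nonneg _) (hfnn x)
    have hF0 : ∀ᵐ x, F x = 0 := by
      have := (integral_eq_zero_iff_of_nonneg hFnn hFint).mp hFI
      filter_upwards [this] with x hx
      exact hx
    have hfm : ∀ᵐ x ∂(volume.restrict (Set.Ioo a b)), f x = m * x⁻¹ := by
      filter_upwards [ae_restrict_of_ae hF0, ae_restrict_mem hIoo] with x hx hmem
      have hxpos : 0 < x := ha.trans hmem.1
      have hfx : 0 < f x := hpos x hmem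
      have : (x * f x - m)^2 = 0 := by
        rcases mul_eq_zero.mp hx with h' | h'
        · exact h'
        · exact absurd h' (ne_of_gt hfx)
      have hxm : x * f x = m := by nlinarith [sq_nonneg (x * f x - m)]
      field_simp
      linarith [hxm]
    have hmL : m = L⁻¹ := by
      have : (∫ x in Set.Ioo a b, f x) = ∫ x in Set.Ioo a b, m * x⁻¹ :=
        integral_congr_ae hfm
      rw [hfset, integral_const_mul, hIoox] at this
      field_simp at this ⊢
      linarith
    filter_upwards [hfm, ae_restrict_mem hIoo] with x hx hmem
    have hxpos : 0 < x := ha.trans hmem.1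
    rw [hx, hmL]
    field_simp
  · intro hae
    have h1 : ∀ᵐ x ∂(volume.restrict (Set.Ioo a b)),
        (x * f x) * f x = L⁻¹ * f x := by
      filter_upwards [hae, ae_restrict_mem hIoo] with x hx hmem
      have hxpos : 0 < x := ha.trans hmem.1
      rw [hx]
      field_simp
    have h2 : ∀ᵐ x ∂(volume.restrict (Set.Ioo a b)),
        (x * f x)^2 * f x = L⁻¹^2 * f x := by
      filter_upwards [hae, ae_restrict_mem hIoo] with x hx hmem
      have hxpos : 0 < x := ha.trans hmem.1
      rw [hx]
      field_simp
    have hI1 : (∫ x : ℝ, (x * f x) * f x) = L⁻¹ := by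
      rw [← hset _ (fun x hx => by rw [hsupp x hx]; ring)]
      rw [integral_congr_ae h1, integral_const_mul, hfset, mul_one]
    have hI2 : (∫ x : ℝ, (x * f x)^2 * f x) = L⁻¹^2 := by
      rw [← hset _ (fun x hx => by rw [hsupp x hx]; ring)]
      rw [integral_congr_ae h2, integral_const_mul, hfset, mul_one]
    rw [hI1, hI2]
    ring
end

section
/- If X has the reciprocal density f(x) = 1/(x log(b/a)) on (a,b) with 0 < a < b, then X f(X) is almost surely constant equal to 1/log(b/a), and hence VJ^w(X) = (1/4)Var[X f(X)] = 0; consequently for every absolutely continuous random variable Y, VJ^w(X) ≤ VJ^w(Y). -/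
open MeasureTheory

/-- If `X` has the reciprocal density `f(x) = 1/(x log(b/a))` on `(a,b)` with
`0 < a < b`, then `X f(X)` is constant equal to `1/log(b/a)` on `(a,b)`, the
weighted varextropy `VJʷ(X) = (1/4)Var[X f(X)]` is `0`, and consequently
`VJʷ(X) ≤ VJʷ(Y)` for every absolutely continuous random variable `Y`. -/
theorem reciprocal_minimizes_weighted_varextropy
    (a b : ℝ) (ha : 0 < a) (hab : a < b) (f : ℝ → ℝ)
    (hf : ∀ x, f x = if x ∈ Set.Ioo a b then 1 / (x * Real.log (b/a)) else 0) :
    (∀ x ∈ Set.Ioo a b, x * f x = 1 / Real.log (b/a))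
    ∧ (1/4 : ℝ) * ((∫ x : ℝ, (x * f x)^2 * f x) - (∫ x : ℝ, (x * f x) * f x)^2) = 0
    ∧ ∀ g : ℝ → ℝ, Measurable g → (∀ y, 0 ≤ g y) → (∫ y : ℝ, g y) = 1 →
        Integrable (fun y : ℝ => (y * g y)^2 * g y) →
        Integrable (fun y : ℝ => (y * g y) * g y) →
        (1/4 : ℝ) * ((∫ x : ℝ, (x * f x)^2 * f x) - (∫ x : ℝ, (x * f x) * f x)^2)
          ≤ (1/4 : ℝ) * ((∫ y : ℝ, (y * g y)^2 * g y) - (∫ y : ℝ, (y * g y) * g y)^2) := by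
  set L := Real.log (b / a) with hLdef
  have hL : 0 < L := Real.log_pos ((one_lt_div ha).mpr hab)
  -- Part 1
  have part1 : ∀ x ∈ Set.Ioo a b, x * f x = 1 / L := by
    intro x hx
    have hx0 : x ≠ 0 := ne_of_gt (lt_trans ha hx.1)
    rw [hf x, if_pos hx]
    field_simp
  -- f as an indicator
  have hfind : f = Set.indicator (Set.Ioo a b) (fun x => 1 / (x * L)) := by
    funext x
    rw [hf x, Set.indicator_apply]
  -- ∫ f = 1
  have hintf : (∫ x : ℝ, f x) = 1 := by
    rw [hfind]
    rw [MeasureTheory.integral_indicator measurableSet_Ioo]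
    have h1 : ∀ x : ℝ, 1 / (x * L) = (1 / L) * (1 / x) := by
      intro x; rw [mul_comm x L]; field_simp
    simp_rw [h1]
    rw [MeasureTheory.integral_const_mul]
    have : (∫ x in Set.Ioo a b, 1 / x) = ∫ x in a..b, 1 / x := by
      rw [intervalIntegral.integral_of_le (le_of_lt hab),
        MeasureTheory.integral_Ioc_eq_integral_Ioo]
    rw [this, integral_one_div]
    · field_simp; exact hLdef.symm
    · intro hmem
      rcases Set.mem_uIcc.mp hmem with h | h
      · linarith [h.1]
      · linarith [h.1]
  -- pointwise identities
  have hp2 : ∀ x : ℝ, (x * f x) ^ 2 * f x = (1 / L) ^ 2 * f x := by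
    intro x
    by_cases hx : x ∈ Set.Ioo a b
    · rw [part1 x hx]
    · rw [hf x, if_neg hx]; ring
  have hp1 : ∀ x : ℝ, (x * f x) * f x = (1 / L) * f x := by
    intro x
    by_cases hx : x ∈ Set.Ioo a b
    · rw [part1 x hx]
    · rw [hf x, if_neg hx]; ring
  have hI2 : (∫ x : ℝ, (x * f x) ^ 2 * f x) = (1 / L) ^ 2 := by
    simp_rw [hp2]; rw [MeasureTheory.integral_const_mul, hintf, mul_one]
  have hI1 : (∫ x : ℝ, (x * f x) * f x) = 1 / L := by
    simp_rw [hp1]; rw [MeasureTheory.integral_const_mul, hintf, mul_one]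
  have part2 : (1/4 : ℝ) * ((∫ x : ℝ, (x * f x)^2 * f x) - (∫ x : ℝ, (x * f x) * f x)^2) = 0 := by
    rw [hI2, hI1]; ring
  refine ⟨part1, part2, ?_⟩
  intro g hgm hg0 hgint h2 h1
  rw [part2]
  have hgInt : Integrable g := by
    by_contra h
    rw [MeasureTheory.integral_undef h] at hgint
    exact one_ne_zero hgint.symm
  set m := ∫ y : ℝ, (y * g y) * g y with hm
  have hexp : ∀ y : ℝ, (y * g y - m) ^ 2 * g y
      = (y * g y) ^ 2 * g y - (2 * m) * ((y * g y) * g y) + m ^ 2 * g y := by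
    intro y; ring
  have key : 0 ≤ ∫ y : ℝ, (y * g y - m) ^ 2 * g y :=
    MeasureTheory.integral_nonneg fun y => mul_nonneg (sq_nonneg _) (hg0 y)
  have hval : (∫ y : ℝ, (y * g y - m) ^ 2 * g y)
      = (∫ y : ℝ, (y * g y) ^ 2 * g y) - m ^ 2 := by
    simp_rw [hexp]
    have hIsub : Integrable (fun y : ℝ => (y * g y) ^ 2 * g y - (2 * m) * ((y * g y) * g y)) :=
      h2.sub (h1.const_mul (2 * m))
    rw [MeasureTheory.integral_add hIsub (hgInt.const_mul (m ^ 2)),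
      MeasureTheory.integral_sub h2 (h1.const_mul (2 * m)),
      MeasureTheory.integral_const_mul, MeasureTheory.integral_const_mul, ← hm, hgint]
    ring
  rw [hval] at key
  nlinarith [key]
end

section
/- Let X be an absolutely continuous random variable with density f symmetric about zero (f(−x) = f(x), hence F(−y) = 1 − F(y)). Let X_{r:n} denote the r-th order statistic from an i.i.d. sample of size n, whose density is f_{r:n}(x) = (1/B(r, n−r+1)) F(x)^{r−1}(1−F(x))^{n−r} f(x). Then the weighted varextropy satisfies VJ^w(X_{r:n}) = VJ^w(X_{n−r+1:n}). -/
open MeasureTheory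

/-- Density of the `k`-th order statistic of a sample of size `n` from a
distribution with cdf `F` and density `f`:
`f_{k:n}(x) = (Γ(n+1)/(Γ(k)Γ(n−k+1))) F(x)^(k−1) (1−F(x))^(n−k) f(x)`. -/
noncomputable def orderStatDensity (n k : ℕ) (F f : ℝ → ℝ) (x : ℝ) : ℝ :=
  (Real.Gamma ((n : ℝ) + 1) / (Real.Gamma (k : ℝ) * Real.Gamma ((n : ℝ) - (k : ℝ) + 1)))
    * (F x) ^ (k - 1) * (1 - F x) ^ (n - k) * f x

/-- Weighted varextropy of a density `h`:
`VJʷ = (1/4)∫ x² h(x)³ dx − ((1/2)∫ x h(x)² dx)²`. -/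
noncomputable def weightedVarextropy (h : ℝ → ℝ) : ℝ :=
  (1/4 : ℝ) * (∫ x : ℝ, x^2 * (h x)^3) - ((1/2 : ℝ) * ∫ x : ℝ, x * (h x)^2)^2

/-!
For a symmetric density the reflection `x ↦ -x` exchanges `F` and `1 - F`, so it carries the
density of `X_{r:n}` to that of `X_{n-r+1:n}`. The weighted varextropy is invariant under
reflection: `x² g(x)³` is even in `x`, and `∫ x g(x)²` only changes sign, inside a square.
-/

open Set

lemma weightedVarextropy_comp_neg (g : ℝ → ℝ) :
    weightedVarextropy (fun x => g (-x)) = weightedVarextropy g := by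
  have h_even : ∫ x : ℝ, x ^ 2 * g (-x) ^ 3 = ∫ x : ℝ, x ^ 2 * g x ^ 3 := by
    rw [← integral_neg_eq_self (fun x : ℝ => x ^ 2 * g x ^ 3) volume]
    simp only [even_two.neg_pow]
  have h_odd : ∫ x : ℝ, x * g (-x) ^ 2 = -∫ x : ℝ, x * g x ^ 2 := by
    rw [← integral_neg_eq_self (fun x : ℝ => x * g x ^ 2) volume, ← integral_neg]
    simp only [neg_neg, neg_mul]
  simp only [weightedVarextropy, h_even, h_odd]
  ring

lemma integral_Iic_neg_of_even {f : ℝ → ℝ} (hf : Integrable f) (hsym : ∀ x, f (-x) = f x)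
    (x : ℝ) :
    ∫ t in Iic (-x), f t = (∫ t, f t) - ∫ t in Iic x, f t := by
  have h_tail : ∫ t in Iic (-x), f t = ∫ t in Ioi x, f t := by
    rw [← integral_comp_neg_Ioi]
    simp only [hsym]
  rw [h_tail, ← intervalIntegral.integral_Iic_add_Ioi hf.integrableOn hf.integrableOn]
  ring

lemma orderStatDensity_reflect {n k : ℕ} (hkn : k ≤ n) {F f : ℝ → ℝ}
    (hF : ∀ x, F (-x) = 1 - F x) (hsym : ∀ x, f (-x) = f x) :
    orderStatDensity n (n - k + 1) F f = fun x => orderStatDensity n k F f (-x) := by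
  funext x
  have h_cast : ((n - k + 1 : ℕ) : ℝ) = n - k + 1 := by push_cast [hkn]; ring
  have h_exp₁ : n - k + 1 - 1 = n - k := by omega
  have h_exp₂ : n - (n - k + 1) = k - 1 := by omega
  have h_arg : (n : ℝ) - (n - k + 1) + 1 = k := by ring
  simp only [orderStatDensity, hF, hsym, h_cast, h_exp₁, h_exp₂, h_arg, sub_sub_cancel]
  ring

theorem weighted_varextropy_orderStat_symm_general
    (n r : ℕ) (hrn : r ≤ n)
    (f F : ℝ → ℝ)
    (hf1 : (∫ x : ℝ, f x) = 1)
    (hsym : ∀ x, f (-x) = f x)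
    (hF : ∀ x, F x = ∫ t in Set.Iic x, f t) :
    weightedVarextropy (orderStatDensity n r F f)
      = weightedVarextropy (orderStatDensity n (n - r + 1) F f) := by
  have hf : Integrable f := Integrable.of_integral_ne_zero (by simp [hf1])
  have hF_neg : ∀ x, F (-x) = 1 - F x := fun x => by
    rw [hF, hF, integral_Iic_neg_of_even hf hsym, hf1]
  rw [orderStatDensity_reflect hrn hF_neg hsym, weightedVarextropy_comp_neg]

/-- For a density `f` symmetric about zero (so `F(−y) = 1 − F(y)`), the weighted
varextropies of the `r`-th and `(n−r+1)`-th order statistics coincide. -/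
theorem weighted_varextropy_orderStat_symm
    (n r : ℕ) (hr : 1 ≤ r) (hrn : r ≤ n)
    (f F : ℝ → ℝ) (hf0 : ∀ x, 0 ≤ f x) (hmeas : Measurable f)
    (hf1 : (∫ x : ℝ, f x) = 1)
    (hsym : ∀ x, f (-x) = f x)
    (hF : ∀ x, F x = ∫ t in Set.Iic x, f t) :
    weightedVarextropy (orderStatDensity n r F f)
      = weightedVarextropy (orderStatDensity n (n - r + 1) F f) :=
  weighted_varextropy_orderStat_symm_general n r hrn f F hf1 hsym hF
end

section
/- Let X_{r:n} be the r-th order statistic from an i.i.d. sample of size n with cdf F, density f, and quantile function F^{−1}. Then VJ^w(X_{r:n}) = [B(3r−2, 3(n−r)+1)/(4 B(r,n−r+1)³)]·E[(F^{−1}(V₁))² f(F^{−1}(V₁))²] − [B(2r−1, 2(n−r)+1)²/(4 B(r,n−r+1)⁴)]·E[F^{−1}(V₂) f(F^{−1}(V₂))]², where V₁ ∼ Beta(3r−2, 3(n−r)+1) and V₂ ∼ Beta(2r−1, 2(n−r)+1), assuming r ≥ 1 and the relevant Beta parameters are positive. -/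
open MeasureTheory

/-- Beta function `B(p,q) = Γ(p)Γ(q)/Γ(p+q)` (for natural arguments). -/
noncomputable def betaFun (p q : ℕ) : ℝ :=
  Real.Gamma (p : ℝ) * Real.Gamma (q : ℝ) / Real.Gamma ((p : ℝ) + (q : ℝ))

/-- Density of the `Beta(p,q)` distribution on `(0,1)`. -/
noncomputable def betaPdf (p q : ℕ) (u : ℝ) : ℝ :=
  (1 / betaFun p q) * u ^ (p - 1) * (1 - u) ^ (q - 1)

/-- Density of the `r`-th order statistic of a sample of size `n`. -/
noncomputable def osDensity (n r : ℕ) (F f : ℝ → ℝ) (x : ℝ) : ℝ :=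
  (1 / betaFun r (n - r + 1)) * (F x) ^ (r - 1) * (1 - F x) ^ (n - r) * f x

/-! Substitute `u = F x`, so that `du = f x dx` and `x = F⁻¹ u`. The `(k+1)`-st power of the
order-statistic density is `B(r, n-r+1)^{-(k+1)} F^{(k+1)(r-1)} (1-F)^{(k+1)(n-r)} f^{k+1}`, and
after the substitution `u^{(k+1)(r-1)} (1-u)^{(k+1)(n-r)}` is, up to its normalizing constant,
the `Beta((k+1)(r-1)+1, (k+1)(n-r)+1)` density; `k = 2` and `k = 1` give the two terms. -/

theorem betaFun_pos {p q : ℕ} (hp : 0 < p) (hq : 0 < q) : 0 < betaFun p q := by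
  have hp' : (0 : ℝ) < p := Nat.cast_pos.2 hp
  have hq' : (0 : ℝ) < q := Nat.cast_pos.2 hq
  unfold betaFun
  have := Real.Gamma_pos_of_pos hp'
  have := Real.Gamma_pos_of_pos hq'
  have := Real.Gamma_pos_of_pos (add_pos hp' hq')
  positivity

theorem osDensity_pow (n r k : ℕ) (F f : ℝ → ℝ) (x : ℝ) :
    osDensity n r F f x ^ k = (1 / betaFun r (n - r + 1)) ^ k *
      (F x ^ (k * (r - 1)) * (1 - F x) ^ (k * (n - r)) * f x ^ k) := by
  simp only [osDensity, mul_pow, ← pow_mul, mul_comm k]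
  ring

theorem integral_mul_osDensity_pow_succ (n r k : ℕ) (F f w : ℝ → ℝ) :
    ∫ x, w x * osDensity n r F f x ^ (k + 1) = (1 / betaFun r (n - r + 1)) ^ (k + 1) *
      ∫ x, w x * f x ^ k * F x ^ ((k + 1) * (r - 1)) * (1 - F x) ^ ((k + 1) * (n - r)) *
        f x := by
  rw [← integral_const_mul]
  congr 1 with x
  rw [osDensity_pow]
  ring

theorem setIntegral_range_eq_integral_mul_deriv {F f : ℝ → ℝ} (hf0 : ∀ x, 0 ≤ f x)
    (hderiv : ∀ x, HasDerivAt F (f x) x) (hinj : Function.Injective F) (g : ℝ → ℝ) :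
    ∫ u in Set.range F, g u = ∫ x, g (F x) * f x := by
  rw [← Set.image_univ, integral_image_eq_integral_abs_deriv_smul MeasurableSet.univ
    (fun x _ => (hderiv x).hasDerivWithinAt) hinj.injOn g, Measure.restrict_univ]
  congr 1 with x
  rw [abs_of_nonneg (hf0 x), smul_eq_mul, mul_comm]

section Quantile

variable {f F Finv : ℝ → ℝ} (hf0 : ∀ x, 0 ≤ f x) (hderiv : ∀ x, HasDerivAt F (f x) x)
  (hrange : ∀ x, F x ∈ Set.Ioo (0 : ℝ) 1)
  (hFinv : ∀ u ∈ Set.Ioo (0 : ℝ) 1, F (Finv u) = u) (hFinvF : ∀ x, Finv (F x) = x)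
include hf0 hderiv hrange hFinv hFinvF

theorem setIntegral_comp_quantile_mul (g h : ℝ → ℝ) :
    ∫ u in Set.Ioo (0 : ℝ) 1, g (Finv u) * h u = ∫ x, g x * h (F x) * f x := by
  have hrangeF : Set.range F = Set.Ioo 0 1 :=
    Set.Subset.antisymm (Set.range_subset_iff.2 hrange) fun u hu => ⟨Finv u, hFinv u hu⟩
  rw [← hrangeF, setIntegral_range_eq_integral_mul_deriv hf0 hderiv
    (Function.LeftInverse.injective hFinvF)]
  simp only [hFinvF]

theorem setIntegral_comp_quantile_mul_betaPdf {p q a b : ℕ} (hp : p - 1 = a) (hq : q - 1 = b)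
    (g : ℝ → ℝ) :
    ∫ u in Set.Ioo (0 : ℝ) 1, g (Finv u) * betaPdf p q u =
      1 / betaFun p q * ∫ x, g x * F x ^ a * (1 - F x) ^ b * f x := by
  rw [setIntegral_comp_quantile_mul hf0 hderiv hrange hFinv hFinvF, ← integral_const_mul]
  congr 1 with x
  rw [betaPdf, hp, hq]
  ring

end Quantile

theorem weighted_varextropy_orderStat_beta_repr_general
    (n r : ℕ) (hr : 1 ≤ r)
    (f F Finv : ℝ → ℝ)
    (hf0 : ∀ x, 0 ≤ f x)
    (hderiv : ∀ x, HasDerivAt F (f x) x)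
    (hrange : ∀ x, F x ∈ Set.Ioo (0:ℝ) 1)
    (hFinv : ∀ u ∈ Set.Ioo (0:ℝ) 1, F (Finv u) = u)
    (hFinvF : ∀ x, Finv (F x) = x) :
    (1/4 : ℝ) * (∫ x : ℝ, x^2 * (osDensity n r F f x)^3)
      - ((1/2 : ℝ) * ∫ x : ℝ, x * (osDensity n r F f x)^2)^2
    = (betaFun (3*r - 2) (3*(n - r) + 1) / (4 * (betaFun r (n - r + 1))^3)) *
        (∫ u in Set.Ioo (0:ℝ) 1,
          ((Finv u)^2 * (f (Finv u))^2) * betaPdf (3*r - 2) (3*(n - r) + 1) u)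
      - ((betaFun (2*r - 1) (2*(n - r) + 1))^2 / (4 * (betaFun r (n - r + 1))^4)) *
          (∫ u in Set.Ioo (0:ℝ) 1,
            (Finv u * f (Finv u)) * betaPdf (2*r - 1) (2*(n - r) + 1) u)^2 := by
  have hB : betaFun r (n - r + 1) ≠ 0 := (betaFun_pos hr (by omega)).ne'
  have hB₃ : betaFun (3 * r - 2) (3 * (n - r) + 1) ≠ 0 :=
    (betaFun_pos (by omega) (by omega)).ne'
  have hB₂ : betaFun (2 * r - 1) (2 * (n - r) + 1) ≠ 0 :=
    (betaFun_pos (by omega) (by omega)).ne'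
  rw [integral_mul_osDensity_pow_succ n r 2, integral_mul_osDensity_pow_succ n r 1,
    setIntegral_comp_quantile_mul_betaPdf hf0 hderiv hrange hFinv hFinvF
      (a := (2 + 1) * (r - 1)) (b := (2 + 1) * (n - r)) (by omega) (by omega)
      (fun x => x ^ 2 * f x ^ 2),
    setIntegral_comp_quantile_mul_betaPdf hf0 hderiv hrange hFinv hFinvF
      (a := (1 + 1) * (r - 1)) (b := (1 + 1) * (n - r)) (by omega) (by omega)
      (fun x => x * f x)]
  simp only [Nat.reduceAdd]
  field_simp
  ring

/-- Weighted varextropy of the `r`-th order statistic, expressed via Beta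
distributed random variables `V₁ ∼ Beta(3r−2, 3(n−r)+1)` and
`V₂ ∼ Beta(2r−1, 2(n−r)+1)` through the quantile function `F⁻¹`. -/
theorem weighted_varextropy_orderStat_beta_repr
    (n r : ℕ) (hr : 1 ≤ r) (hrn : r ≤ n)
    (f F Finv : ℝ → ℝ)
    (hf0 : ∀ x, 0 ≤ f x) (hmeas : Measurable f)
    (hderiv : ∀ x, HasDerivAt F (f x) x)
    (hrange : ∀ x, F x ∈ Set.Ioo (0:ℝ) 1)
    (hFinv : ∀ u ∈ Set.Ioo (0:ℝ) 1, F (Finv u) = u)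
    (hFinvF : ∀ x, Finv (F x) = x) :
    (1/4 : ℝ) * (∫ x : ℝ, x^2 * (osDensity n r F f x)^3)
      - ((1/2 : ℝ) * ∫ x : ℝ, x * (osDensity n r F f x)^2)^2
    = (betaFun (3*r - 2) (3*(n - r) + 1) / (4 * (betaFun r (n - r + 1))^3)) *
        (∫ u in Set.Ioo (0:ℝ) 1,
          ((Finv u)^2 * (f (Finv u))^2) * betaPdf (3*r - 2) (3*(n - r) + 1) u)
      - ((betaFun (2*r - 1) (2*(n - r) + 1))^2 / (4 * (betaFun r (n - r + 1))^4)) *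
          (∫ u in Set.Ioo (0:ℝ) 1,
            (Finv u * f (Finv u)) * betaPdf (2*r - 1) (2*(n - r) + 1) u)^2 :=
  weighted_varextropy_orderStat_beta_repr_general n r hr f F Finv hf0 hderiv hrange hFinv hFinvF
end

section
/- Let f_T be a probability density on (0,∞) of a nonnegative random variable T. Then ∫₀^∞ f_T(x)² dx ≥ (1/4)∫₀^∞ ( (1/x)∫₀^x f_T(t) dt )² dx = (1/4)∫₀^∞ F_T(x)²/x² dx, and consequently the extropy satisfies J(T) = −(1/2)∫₀^∞ f_T² ≤ −(1/8)∫₀^∞ F_T(x)²/x² dx. -/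
open MeasureTheory

open Set Real ENNReal in
/-- Cauchy-Schwarz step for Hardy's inequality. -/
lemma cs_step (f : ℝ → ℝ) (hmeas : Measurable f) (hf0 : ∀ x, 0 ≤ f x)
    (hfint : IntegrableOn f (Set.Ioi (0:ℝ))) {x : ℝ} (hx : 0 < x) :
    ENNReal.ofReal (∫ t in Set.Ioc (0:ℝ) x, f t) ^ 2
      ≤ (∫⁻ t in Set.Ioc (0:ℝ) x, ENNReal.ofReal ((f t)^2 * Real.sqrt t))
        * ENNReal.ofReal (2 * Real.sqrt x) := by
  set a : ℝ → ℝ≥0∞ := fun t => ENNReal.ofReal (f t * t ^ ((1:ℝ)/4))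
  set b : ℝ → ℝ≥0∞ := fun t => ENNReal.ofReal (t ^ (-(1:ℝ)/4))
  have hameas : Measurable a := (hmeas.mul (measurable_id.pow_const _)).ennreal_ofReal
  have hbmeas : Measurable b := (measurable_id.pow_const _).ennreal_ofReal
  have hconj : (2:ℝ).HolderConjugate 2 := Real.HolderConjugate.two_two
  have hCS := ENNReal.lintegral_mul_le_Lp_mul_Lq (volume.restrict (Set.Ioc (0:ℝ) x)) hconj
    hameas.aemeasurable hbmeas.aemeasurable
  -- LHS of hCS equals ofReal (F x)
  have hL : (∫⁻ t in Set.Ioc (0:ℝ) x, (a * b) t) = ENNReal.ofReal (∫ t in Set.Ioc (0:ℝ) x, f t) := by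
    rw [ofReal_integral_eq_lintegral_ofReal (hfint.mono_set Set.Ioc_subset_Ioi_self)
      (Filter.Eventually.of_forall fun t => hf0 t)]
    refine setLIntegral_congr_fun measurableSet_Ioc (fun t ht => ?_)
    simp only [a, b, Pi.mul_apply, ← ENNReal.ofReal_mul (mul_nonneg (hf0 t) (Real.rpow_nonneg ht.1.le _))]
    congr 1
    rw [mul_assoc, ← Real.rpow_add ht.1]
    norm_num
  have hA : (∫⁻ t in Set.Ioc (0:ℝ) x, a t ^ (2:ℝ))
      = ∫⁻ t in Set.Ioc (0:ℝ) x, ENNReal.ofReal ((f t)^2 * Real.sqrt t) := by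
    refine setLIntegral_congr_fun measurableSet_Ioc (fun t ht => ?_)
    rw [show a t = ENNReal.ofReal (f t * t ^ ((1:ℝ)/4)) from rfl,
      ENNReal.ofReal_rpow_of_nonneg (mul_nonneg (hf0 t) (Real.rpow_nonneg ht.1.le _)) (by norm_num)]
    congr 1
    rw [Real.rpow_two, mul_pow, ← Real.rpow_natCast (t ^ ((1:ℝ)/4)) 2, ← Real.rpow_mul ht.1.le,
      Real.sqrt_eq_rpow]
    norm_num
  have hB : (∫⁻ t in Set.Ioc (0:ℝ) x, b t ^ (2:ℝ)) = ENNReal.ofReal (2 * Real.sqrt x) := by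
    have hint : IntegrableOn (fun t : ℝ => t ^ (-(1:ℝ)/2)) (Set.Ioc 0 x) :=
      (intervalIntegral.intervalIntegrable_rpow' (by norm_num)).1
    have hval : (∫ t in Set.Ioc (0:ℝ) x, t ^ (-(1:ℝ)/2)) = 2 * Real.sqrt x := by
      rw [← intervalIntegral.integral_of_le hx.le,
        integral_rpow (Or.inl (by norm_num))]
      rw [Real.zero_rpow (by norm_num), Real.sqrt_eq_rpow]
      norm_num
      ring
    calc (∫⁻ t in Set.Ioc (0:ℝ) x, b t ^ (2:ℝ))
        = ∫⁻ t in Set.Ioc (0:ℝ) x, ENNReal.ofReal (t ^ (-(1:ℝ)/2)) := by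
          refine setLIntegral_congr_fun measurableSet_Ioc (fun t ht => ?_)
          rw [show b t = ENNReal.ofReal (t ^ (-(1:ℝ)/4)) from rfl,
            ENNReal.ofReal_rpow_of_nonneg (Real.rpow_nonneg ht.1.le _) (by norm_num),
            ← Real.rpow_mul ht.1.le]
          norm_num
      _ = ENNReal.ofReal (2 * Real.sqrt x) := by
          rw [← hval, ofReal_integral_eq_lintegral_ofReal hint
            ((ae_restrict_iff' measurableSet_Ioc).2 (Filter.Eventually.of_forall
              fun t ht => Real.rpow_nonneg ht.1.le _))]
  rw [hL, hA, hB] at hCS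
  calc ENNReal.ofReal (∫ t in Set.Ioc (0:ℝ) x, f t) ^ 2
      ≤ ((∫⁻ t in Set.Ioc (0:ℝ) x, ENNReal.ofReal ((f t)^2 * Real.sqrt t)) ^ ((1:ℝ)/2)
          * ENNReal.ofReal (2 * Real.sqrt x) ^ ((1:ℝ)/2)) ^ 2 :=
        pow_le_pow_left' hCS 2
    _ = _ := by
        rw [mul_pow, ← ENNReal.rpow_natCast (_ ^ ((1:ℝ)/2)) 2, ← ENNReal.rpow_natCast (ENNReal.ofReal (2 * Real.sqrt x) ^ ((1:ℝ)/2)) 2,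
          ← ENNReal.rpow_mul, ← ENNReal.rpow_mul]
        norm_num

open Set Real ENNReal in
/-- Hardy-inequality bound for extropy: for a density `f_T` on `(0,∞)` with
cdf `F_T(x) = ∫₀ˣ f_T`, one has
`∫₀^∞ f_T² ≥ (1/4)∫₀^∞ ((1/x)∫₀ˣ f_T)² dx = (1/4)∫₀^∞ F_T(x)²/x² dx`, hence
`J(T) = −(1/2)∫₀^∞ f_T² ≤ −(1/8)∫₀^∞ F_T(x)²/x² dx`. -/
theorem extropy_hardy_bound
    (f : ℝ → ℝ) (hmeas : Measurable f) (hf0 : ∀ x, 0 ≤ f x)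
    (hsupp : ∀ x ≤ (0:ℝ), f x = 0)
    (hf1 : (∫ x in Set.Ioi (0:ℝ), f x) = 1)
    (hL2 : IntegrableOn (fun x => (f x)^2) (Set.Ioi (0:ℝ))) :
    ((∫ x in Set.Ioi (0:ℝ), ((1/x) * ∫ t in Set.Ioc (0:ℝ) x, f t)^2)
        = ∫ x in Set.Ioi (0:ℝ), (∫ t in Set.Ioc (0:ℝ) x, f t)^2 / x^2)
    ∧ ((1/4 : ℝ) * (∫ x in Set.Ioi (0:ℝ), ((1/x) * ∫ t in Set.Ioc (0:ℝ) x, f t)^2)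
        ≤ ∫ x in Set.Ioi (0:ℝ), (f x)^2)
    ∧ (-(1/2 : ℝ)) * (∫ x in Set.Ioi (0:ℝ), (f x)^2)
        ≤ -(1/8 : ℝ) * ∫ x in Set.Ioi (0:ℝ), (∫ t in Set.Ioc (0:ℝ) x, f t)^2 / x^2 := by
  have hfint : IntegrableOn f (Set.Ioi (0:ℝ)) := by
    by_contra h
    rw [integral_undef h] at hf1
    norm_num at hf1
  set F : ℝ → ℝ := fun x => ∫ t in Set.Ioc (0:ℝ) x, f t with hF
  have part1 : (∫ x in Set.Ioi (0:ℝ), ((1/x) * F x)^2)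
      = ∫ x in Set.Ioi (0:ℝ), (F x)^2 / x^2 :=
    integral_congr_ae (Filter.Eventually.of_forall fun x => by ring)
  have hF0 : ∀ x, 0 ≤ F x := fun x =>
    setIntegral_nonneg measurableSet_Ioc fun t _ => hf0 t
  have hFmono : Monotone F := by
    intro x y hxy
    exact setIntegral_mono_set (hfint.mono_set Set.Ioc_subset_Ioi_self)
      ((ae_restrict_iff' measurableSet_Ioc).2 (Filter.Eventually.of_forall fun t _ => hf0 t))
      (HasSubset.Subset.eventuallyLE (Set.Ioc_subset_Ioc_right hxy))
  have hFmeas : Measurable F := hFmono.measurable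
  set ψ : ℝ → ℝ≥0∞ := fun t => ENNReal.ofReal ((f t)^2 * Real.sqrt t) with hψ
  have hψmeas : Measurable ψ :=
    ((hmeas.pow_const 2).mul Real.continuous_sqrt.measurable).ennreal_ofReal
  set c : ℝ → ℝ≥0∞ := fun x => ENNReal.ofReal (2 * x ^ (-(3:ℝ)/2)) with hc
  have hcmeas : Measurable c :=
    ((measurable_const.mul (measurable_id.pow_const _)) :
      Measurable fun x : ℝ => 2 * x ^ (-(3:ℝ)/2)).ennreal_ofReal
  set A : ℝ → ℝ≥0∞ := fun x => ∫⁻ t in Set.Ioc (0:ℝ) x, ψ t with hA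
  have hAmono : Monotone A := fun x y hxy =>
    lintegral_mono_set (Set.Ioc_subset_Ioc_right hxy)
  have hAmeas : Measurable A := hAmono.measurable
  -- pointwise bound
  have hpt : ∀ x ∈ Set.Ioi (0:ℝ), ENNReal.ofReal (((1/x) * F x)^2) ≤ A x * c x := by
    intro x hx
    rw [Set.mem_Ioi] at hx
    have h1 : ((1/x) * F x)^2 = (F x)^2 * ((x^2)⁻¹) := by
      field_simp
    have h2 : ENNReal.ofReal (((1/x) * F x)^2)
        = ENNReal.ofReal (F x) ^ 2 * (ENNReal.ofReal (x^2))⁻¹ := by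
      rw [h1, ENNReal.ofReal_mul (by positivity), ENNReal.ofReal_pow (hF0 x),
        ENNReal.ofReal_inv_of_pos (by positivity)]
    rw [h2]
    calc ENNReal.ofReal (F x) ^ 2 * (ENNReal.ofReal (x^2))⁻¹
        ≤ (A x * ENNReal.ofReal (2 * Real.sqrt x)) * (ENNReal.ofReal (x^2))⁻¹ :=
          mul_le_mul_left (cs_step f hmeas hf0 hfint hx) _
      _ = A x * c x := by
          rw [mul_assoc, ← ENNReal.ofReal_inv_of_pos (by positivity),
            ← ENNReal.ofReal_mul (by positivity), hc]
          congr 2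
          have hs : Real.sqrt x * (x^2)⁻¹ = x ^ (-(3:ℝ)/2) := by
            rw [Real.sqrt_eq_rpow, show ((x^2)⁻¹) = x ^ (-(2:ℝ)) by
              rw [Real.rpow_neg hx.le, Real.rpow_two], ← Real.rpow_add hx]
            norm_num
          rw [mul_assoc, hs]
  have hmono_int : (∫⁻ x in Set.Ioi (0:ℝ), ENNReal.ofReal (((1/x) * F x)^2))
      ≤ ∫⁻ x in Set.Ioi (0:ℝ), A x * c x :=
    setLIntegral_mono (hAmeas.mul hcmeas) hpt
  -- Tonelli
  set K : ℝ × ℝ → ℝ≥0∞ :=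
    fun p => Set.indicator {p : ℝ × ℝ | p.2 ≤ p.1} (fun p => ψ p.2 * c p.1) p with hK
  have hKmeas : Measurable K :=
    ((hψmeas.comp measurable_snd).mul (hcmeas.comp measurable_fst)).indicator
      (measurableSet_le measurable_snd measurable_fst)
  have hinner1 : ∀ x ∈ Set.Ioi (0:ℝ), A x * c x = ∫⁻ t in Set.Ioi (0:ℝ), K (x, t) := by
    intro x _
    have e1 : ∀ t : ℝ, K (x, t) = (Set.Iic x).indicator (fun t => ψ t * c x) t := by
      intro t
      simp only [hK, Set.indicator, Set.mem_setOf_eq, Set.mem_Iic]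
    simp_rw [e1]
    rw [lintegral_indicator measurableSet_Iic _, Measure.restrict_restrict measurableSet_Iic,
      Set.inter_comm, Set.Ioi_inter_Iic, lintegral_mul_const _ hψmeas]
  have hinner2 : ∀ t ∈ Set.Ioi (0:ℝ),
      (∫⁻ x in Set.Ioi (0:ℝ), K (x, t)) = ENNReal.ofReal (4 * (f t)^2) := by
    intro t ht
    rw [Set.mem_Ioi] at ht
    have e1 : ∀ x : ℝ, K (x, t) = (Set.Ici t).indicator (fun x => ψ t * c x) x := by
      intro x
      simp only [hK, Set.indicator, Set.mem_setOf_eq, Set.mem_Ici]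
    simp_rw [e1]
    have hsub : Set.Ici t ∩ Set.Ioi 0 = Set.Ici t :=
      Set.inter_eq_left.2 fun x hx => lt_of_lt_of_le ht hx
    rw [lintegral_indicator measurableSet_Ici _, Measure.restrict_restrict measurableSet_Ici,
      hsub, lintegral_const_mul _ hcmeas]
    have hIci : (∫⁻ x in Set.Ici t, c x) = ENNReal.ofReal (4 * t ^ (-(1:ℝ)/2)) := by
      rw [Measure.restrict_congr_set Ioi_ae_eq_Ici.symm]
      have hint : IntegrableOn (fun x : ℝ => 2 * x ^ (-(3:ℝ)/2)) (Set.Ioi t) :=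
        (integrableOn_Ioi_rpow_of_lt (by norm_num) ht).const_mul 2
      rw [hc, ← ofReal_integral_eq_lintegral_ofReal hint
        ((ae_restrict_iff' measurableSet_Ioi).2 (Filter.Eventually.of_forall fun x hx => by
          have : (0:ℝ) < x := lt_trans ht hx
          positivity))]
      congr 1
      rw [MeasureTheory.integral_const_mul, integral_Ioi_rpow_of_lt (by norm_num) ht]
      rw [show (-(3:ℝ)/2 + 1) = -(1:ℝ)/2 by norm_num]
      ring
    rw [hIci, hψ, ← ENNReal.ofReal_mul (by positivity)]
    congr 1
    have h12 : Real.sqrt t * t ^ (-(1:ℝ)/2) = 1 := by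
      rw [Real.sqrt_eq_rpow, ← Real.rpow_add ht]
      norm_num
    calc (f t)^2 * Real.sqrt t * (4 * t ^ (-(1:ℝ)/2))
        = 4 * (f t)^2 * (Real.sqrt t * t ^ (-(1:ℝ)/2)) := by ring
      _ = 4 * (f t)^2 := by rw [h12, mul_one]
  have hIval : (∫⁻ x in Set.Ioi (0:ℝ), A x * c x)
      = ENNReal.ofReal (4 * ∫ x in Set.Ioi (0:ℝ), (f x)^2) := by
    rw [setLIntegral_congr_fun measurableSet_Ioi
      hinner1]
    rw [lintegral_lintegral_swap hKmeas.aemeasurable]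
    rw [setLIntegral_congr_fun measurableSet_Ioi
      hinner2]
    rw [← ofReal_integral_eq_lintegral_ofReal (hL2.const_mul 4)
      (Filter.Eventually.of_forall fun x => by positivity)]
    rw [MeasureTheory.integral_const_mul]
  have hGmeas : Measurable fun x : ℝ => ((1/x) * F x)^2 :=
    (((measurable_const.div measurable_id).mul hFmeas).pow_const 2)
  have h0 : (0:ℝ) ≤ ∫ x in Set.Ioi (0:ℝ), (f x)^2 :=
    integral_nonneg fun x => sq_nonneg _
  have key : (∫ x in Set.Ioi (0:ℝ), ((1/x) * F x)^2) ≤ 4 * ∫ x in Set.Ioi (0:ℝ), (f x)^2 := by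
    rw [integral_eq_lintegral_of_nonneg_ae (Filter.Eventually.of_forall fun x => sq_nonneg _)
      hGmeas.aestronglyMeasurable]
    have hle : (∫⁻ x in Set.Ioi (0:ℝ), ENNReal.ofReal (((1/x) * F x)^2))
        ≤ ENNReal.ofReal (4 * ∫ x in Set.Ioi (0:ℝ), (f x)^2) :=
      le_trans hmono_int (le_of_eq hIval)
    calc (∫⁻ x in Set.Ioi (0:ℝ), ENNReal.ofReal (((1/x) * F x)^2)).toReal
        ≤ (ENNReal.ofReal (4 * ∫ x in Set.Ioi (0:ℝ), (f x)^2)).toReal :=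
          ENNReal.toReal_mono ENNReal.ofReal_ne_top hle
      _ = 4 * ∫ x in Set.Ioi (0:ℝ), (f x)^2 := ENNReal.toReal_ofReal (by positivity)
  refine ⟨part1, by linarith, ?_⟩
  rw [← part1]
  linarith
end

section
/- For nonnegative measurable f on (0,∞) with f ∈ L^p(0,∞), p > 1, the Hardy inequality holds: ∫₀^∞ ((1/x)∫₀^x f(t) dt)^p dx ≤ (p/(p−1))^p ∫₀^∞ f(x)^p dx. -/
open MeasureTheory Set ENNReal

lemma lint_Ioc_rpow {c : ℝ} (hc : -1 < c) {x : ℝ} (hx : 0 < x) :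
    ∫⁻ t in Set.Ioc 0 x, ENNReal.ofReal (t ^ c) = ENNReal.ofReal (x ^ (c+1) / (c+1)) := by
  have hint : IntegrableOn (fun t : ℝ => t ^ c) (Set.Ioc 0 x) :=
    (intervalIntegral.intervalIntegrable_rpow' hc (a := 0) (b := x)).1
  rw [← ofReal_integral_eq_lintegral_ofReal hint]
  · congr 1
    rw [← intervalIntegral.integral_of_le hx.le, integral_rpow (Or.inl hc),
      Real.zero_rpow (by linarith), sub_zero]
  · filter_upwards [ae_restrict_mem measurableSet_Ioc] with t ht
    exact Real.rpow_nonneg ht.1.le c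

lemma lint_Ioi_rpow {c : ℝ} (hc : c < -1) {t : ℝ} (ht : 0 < t) :
    ∫⁻ x in Set.Ioi t, ENNReal.ofReal (x ^ c) = ENNReal.ofReal (-t ^ (c+1) / (c+1)) := by
  rw [← ofReal_integral_eq_lintegral_ofReal (integrableOn_Ioi_rpow_of_lt hc ht)]
  · rw [integral_Ioi_rpow_of_lt hc ht]
  · filter_upwards [ae_restrict_mem measurableSet_Ioi] with x hx
    exact Real.rpow_nonneg (ht.trans hx).le c

lemma hardy_core (p : ℝ) (hp : 1 < p) (g : ℝ → ℝ≥0∞) (hg : Measurable g) :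
    ∫⁻ x in Ioi (0:ℝ), (ENNReal.ofReal (1/x) * ∫⁻ t in Ioc (0:ℝ) x, g t) ^ p
      ≤ ENNReal.ofReal ((p/(p-1))^p) * ∫⁻ x in Ioi (0:ℝ), g x ^ p := by
  have hp0 : (0:ℝ) < p := by linarith
  set b : ℝ := (p-1)/p with hbdef
  have hb : 0 < b := div_pos (by linarith) hp0
  have hb1 : b < 1 := by rw [hbdef, div_lt_one hp0]; linarith
  set q : ℝ := p/(p-1) with hqdef
  have hpq : p.HolderConjugate q := Real.HolderConjugate.conjExponent hp
  set a : ℝ := b/p with hadef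
  have ha : 0 < a := div_pos hb hp0
  set H : ℝ → ℝ≥0∞ := fun t => g t ^ p * ENNReal.ofReal (t ^ b) with hHdef
  have hH : Measurable H := by
    apply (hg.pow_const _).mul
    exact ENNReal.measurable_ofReal.comp (by fun_prop)
  -- pointwise weighted Hölder estimate
  have key : ∀ x ∈ Ioi (0:ℝ),
      (ENNReal.ofReal (1/x) * ∫⁻ t in Ioc (0:ℝ) x, g t) ^ p
        ≤ ENNReal.ofReal (b ^ (-(b*p))) *
            (ENNReal.ofReal (x ^ (1/p-2)) * ∫⁻ t in Ioc (0:ℝ) x, H t) := by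
    intro x hx
    rw [mem_Ioi] at hx
    set f₁ : ℝ → ℝ≥0∞ := fun t => g t * ENNReal.ofReal (t ^ a) with hf₁
    set f₂ : ℝ → ℝ≥0∞ := fun t => ENNReal.ofReal (t ^ (-a)) with hf₂
    have hm₁ : Measurable f₁ :=
      hg.mul (ENNReal.measurable_ofReal.comp (by fun_prop))
    have hm₂ : Measurable f₂ :=
      ENNReal.measurable_ofReal.comp (by fun_prop)
    have hsplit : ∫⁻ t in Ioc (0:ℝ) x, g t = ∫⁻ t in Ioc (0:ℝ) x, (f₁ * f₂) t := by
      refine lintegral_congr_ae ?_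
      filter_upwards [ae_restrict_mem measurableSet_Ioc] with t ht
      have ht0 : (0:ℝ) < t := ht.1
      simp only [Pi.mul_apply, hf₁, hf₂, mul_assoc]
      rw [← ENNReal.ofReal_mul (Real.rpow_nonneg ht0.le _),
        ← Real.rpow_add ht0, add_neg_cancel, Real.rpow_zero, ENNReal.ofReal_one, mul_one]
    have hHolder := ENNReal.lintegral_mul_le_Lp_mul_Lq
      (volume.restrict (Ioc (0:ℝ) x)) hpq hm₁.aemeasurable hm₂.aemeasurable
    have e1 : ∫⁻ t in Ioc (0:ℝ) x, f₁ t ^ p = ∫⁻ t in Ioc (0:ℝ) x, H t := by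
      refine lintegral_congr_ae ?_
      filter_upwards [ae_restrict_mem measurableSet_Ioc] with t ht
      have ht0 : (0:ℝ) < t := ht.1
      simp only [hf₁, hHdef]
      rw [ENNReal.mul_rpow_of_nonneg _ _ hp0.le,
        ENNReal.ofReal_rpow_of_pos (Real.rpow_pos_of_pos ht0 _),
        ← Real.rpow_mul ht0.le, (by rw [hadef]; field_simp : a * p = b)]
    have hc2 : (-1:ℝ) < -(1/p) := by
      have : 1/p < 1 := by rw [div_lt_one hp0]; exact hp
      linarith
    have haq : -a * q = -(1/p) := by
      have h1 : p - 1 ≠ 0 := by linarith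
      rw [hadef, hbdef, hqdef]
      field_simp
    have hbb : -(1/p) + 1 = b := by rw [hbdef]; field_simp; ring
    have e2 : ∫⁻ t in Ioc (0:ℝ) x, f₂ t ^ q = ENNReal.ofReal (x ^ b / b) := by
      have h0 : ∫⁻ t in Ioc (0:ℝ) x, f₂ t ^ q
          = ∫⁻ t in Ioc (0:ℝ) x, ENNReal.ofReal (t ^ (-(1/p))) := by
        refine lintegral_congr_ae ?_
        filter_upwards [ae_restrict_mem measurableSet_Ioc] with t ht
        have ht0 : (0:ℝ) < t := ht.1
        simp only [hf₂]
        rw [ENNReal.ofReal_rpow_of_pos (Real.rpow_pos_of_pos ht0 _),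
          ← Real.rpow_mul ht0.le, haq]
      rw [h0, lint_Ioc_rpow hc2 hx, hbb]
    have h1qp : (1/q) * p = b * p := by rw [hqdef, hbdef]; field_simp
    have hxb : (0:ℝ) < x ^ b / b := div_pos (Real.rpow_pos_of_pos hx _) hb
    have collapse : ((∫⁻ t in Ioc (0:ℝ) x, H t) ^ (1/p)) ^ p
        = ∫⁻ t in Ioc (0:ℝ) x, H t := by
      rw [← ENNReal.rpow_mul, one_div_mul_cancel hp0.ne', ENNReal.rpow_one]
    have hC : ((ENNReal.ofReal (x^b/b)) ^ (1/q)) ^ p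
        = ENNReal.ofReal ((x^b/b) ^ (b*p)) := by
      rw [← ENNReal.rpow_mul, h1qp, ENNReal.ofReal_rpow_of_pos hxb]
    have hexp : b*(b*p) - p = 1/p - 2 := by rw [hbdef]; field_simp; ring
    have hreal : (1/x)^p * (x^b/b)^(b*p) = b ^ (-(b*p)) * x ^ (1/p-2) := by
      rw [one_div, Real.inv_rpow hx.le, Real.div_rpow (Real.rpow_nonneg hx.le b) hb.le,
        ← Real.rpow_mul hx.le, Real.rpow_neg hb.le, ← hexp, Real.rpow_sub hx]
      ring
    have hsc : ENNReal.ofReal ((1/x)^p) * ENNReal.ofReal ((x^b/b)^(b*p))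
        = ENNReal.ofReal (b ^ (-(b*p))) * ENNReal.ofReal (x ^ (1/p-2)) := by
      rw [← ENNReal.ofReal_mul (Real.rpow_nonneg (by positivity) _), hreal,
        ENNReal.ofReal_mul (Real.rpow_nonneg hb.le _)]
    calc (ENNReal.ofReal (1/x) * ∫⁻ t in Ioc (0:ℝ) x, g t) ^ p
        ≤ (ENNReal.ofReal (1/x) * ((∫⁻ t in Ioc (0:ℝ) x, f₁ t ^ p) ^ (1/p)
            * (∫⁻ t in Ioc (0:ℝ) x, f₂ t ^ q) ^ (1/q))) ^ p := by
          rw [hsplit]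
          exact ENNReal.rpow_le_rpow (mul_le_mul_right hHolder _) hp0.le
      _ = ENNReal.ofReal (b ^ (-(b*p))) *
            (ENNReal.ofReal (x ^ (1/p-2)) * ∫⁻ t in Ioc (0:ℝ) x, H t) := by
          rw [e1, e2, ENNReal.mul_rpow_of_nonneg _ _ hp0.le,
            ENNReal.mul_rpow_of_nonneg _ _ hp0.le, collapse, hC,
            ENNReal.ofReal_rpow_of_pos (by positivity : (0:ℝ) < 1/x)]
          rw [mul_comm (∫⁻ t in Ioc (0:ℝ) x, H t), ← mul_assoc, hsc]
          ring
  set K : ℝ → ℝ≥0∞ := fun x => ENNReal.ofReal (x ^ (1/p-2)) with hKdef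
  have hK : Measurable K := ENNReal.measurable_ofReal.comp (by fun_prop)
  set Φ : ℝ × ℝ → ℝ≥0∞ := fun z => if 0 < z.2 ∧ z.2 ≤ z.1 then K z.1 * H z.2 else 0
    with hΦdef
  have hS : MeasurableSet {z : ℝ × ℝ | 0 < z.2 ∧ z.2 ≤ z.1} :=
    (measurableSet_lt measurable_const measurable_snd).inter
      (measurableSet_le measurable_snd measurable_fst)
  have hΦ : Measurable Φ := Measurable.ite hS
    ((hK.comp measurable_fst).mul (hH.comp measurable_snd)) measurable_const
  have inner_eq : ∀ x : ℝ, K x * ∫⁻ t in Ioc (0:ℝ) x, H t = ∫⁻ t in Ioi (0:ℝ), Φ (x, t) := by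
    intro x
    have hpt : ∀ t, Φ (x, t) = (Ioc (0:ℝ) x).indicator (fun t => K x * H t) t := by
      intro t
      simp only [hΦdef, Set.indicator_apply, mem_Ioc]
    calc K x * ∫⁻ t in Ioc (0:ℝ) x, H t
        = ∫⁻ t in Ioc (0:ℝ) x, K x * H t :=
          (lintegral_const_mul' _ _ ENNReal.ofReal_ne_top).symm
      _ = ∫⁻ t in Ioi (0:ℝ), (Ioc (0:ℝ) x).indicator (fun t => K x * H t) t := by
          rw [lintegral_indicator measurableSet_Ioc,
            Measure.restrict_restrict measurableSet_Ioc,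
            Set.inter_eq_self_of_subset_left Ioc_subset_Ioi_self]
      _ = ∫⁻ t in Ioi (0:ℝ), Φ (x, t) := lintegral_congr fun t => (hpt t).symm
  have swap : ∫⁻ x in Ioi (0:ℝ), ∫⁻ t in Ioi (0:ℝ), Φ (x, t)
      = ∫⁻ t in Ioi (0:ℝ), ∫⁻ x in Ioi (0:ℝ), Φ (x, t) :=
    lintegral_lintegral_swap hΦ.aemeasurable
  have outer : ∀ t ∈ Ioi (0:ℝ), ∫⁻ x in Ioi (0:ℝ), Φ (x, t)
      = ENNReal.ofReal (t ^ (-b) / b) * H t := by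
    intro t ht
    rw [mem_Ioi] at ht
    have hc : (1:ℝ)/p - 2 < -1 := by
      have : 1/p < 1 := by rw [div_lt_one hp0]; exact hp
      linarith
    have hind : ∀ x, Φ (x, t) = (Ici t).indicator (fun x => K x * H t) x := by
      intro x
      simp only [hΦdef, Set.indicator_apply, mem_Ici, ht, true_and]
    calc ∫⁻ x in Ioi (0:ℝ), Φ (x, t)
        = ∫⁻ x in Ioi (0:ℝ), (Ici t).indicator (fun x => K x * H t) x :=
          lintegral_congr fun x => hind x
      _ = ∫⁻ x in Ici t, K x * H t := by
          rw [lintegral_indicator measurableSet_Ici,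
            Measure.restrict_restrict measurableSet_Ici,
            Set.inter_eq_self_of_subset_left
              (show Ici t ⊆ Ioi (0:ℝ) from fun y hy => lt_of_lt_of_le ht hy)]
      _ = ∫⁻ x in Ioi t, K x * H t := (setLIntegral_congr Ioi_ae_eq_Ici).symm
      _ = (∫⁻ x in Ioi t, K x) * H t := lintegral_mul_const _ hK
      _ = ENNReal.ofReal (t ^ (-b) / b) * H t := by
          rw [hKdef, lint_Ioi_rpow hc ht]
          congr 2
          have h1 : (1:ℝ)/p - 2 + 1 = -b := by rw [hbdef]; field_simp; ring
          rw [h1, neg_div_neg_eq]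
  calc ∫⁻ x in Ioi (0:ℝ), (ENNReal.ofReal (1/x) * ∫⁻ t in Ioc (0:ℝ) x, g t) ^ p
      ≤ ∫⁻ x in Ioi (0:ℝ), ENNReal.ofReal (b ^ (-(b*p))) *
          (K x * ∫⁻ t in Ioc (0:ℝ) x, H t) := by
        refine lintegral_mono_ae ?_
        filter_upwards [ae_restrict_mem measurableSet_Ioi] with x hx using key x hx
    _ = ENNReal.ofReal (b ^ (-(b*p))) *
          ∫⁻ x in Ioi (0:ℝ), K x * ∫⁻ t in Ioc (0:ℝ) x, H t :=
        lintegral_const_mul' _ _ ENNReal.ofReal_ne_top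
    _ = ENNReal.ofReal (b ^ (-(b*p))) *
          ∫⁻ t in Ioi (0:ℝ), ENNReal.ofReal (t ^ (-b) / b) * H t := by
        congr 1
        rw [lintegral_congr (fun x => inner_eq x), swap]
        refine lintegral_congr_ae ?_
        filter_upwards [ae_restrict_mem measurableSet_Ioi] with t ht using outer t ht
    _ = ENNReal.ofReal (b ^ (-(b*p))) *
          (ENNReal.ofReal (1/b) * ∫⁻ t in Ioi (0:ℝ), g t ^ p) := by
        congr 1
        have hfin : ∀ᵐ t ∂(volume.restrict (Ioi (0:ℝ))),
            ENNReal.ofReal (t ^ (-b) / b) * H t = ENNReal.ofReal (1/b) * g t ^ p := by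
          filter_upwards [ae_restrict_mem measurableSet_Ioi] with t ht
          rw [mem_Ioi] at ht
          simp only [hHdef]
          rw [mul_comm (g t ^ p), ← mul_assoc, ← ENNReal.ofReal_mul (by positivity)]
          congr 2
          rw [div_mul_eq_mul_div, ← Real.rpow_add ht, neg_add_cancel, Real.rpow_zero]
        rw [lintegral_congr_ae hfin, lintegral_const_mul' _ _ ENNReal.ofReal_ne_top]
    _ = ENNReal.ofReal ((p/(p-1))^p) * ∫⁻ x in Ioi (0:ℝ), g x ^ p := by
        rw [← mul_assoc, ← ENNReal.ofReal_mul (Real.rpow_nonneg hb.le _)]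
        congr 2
        have h1 : p/(p-1) = b⁻¹ := by rw [hbdef]; field_simp
        have h2 : b * p = p - 1 := by rw [hbdef]; field_simp
        have h3 : b ^ (-(b*p)) * (1/b) = b ^ (-p) := by
          rw [h2, one_div, ← Real.rpow_neg_one b, ← Real.rpow_add hb]
          congr 1
          ring
        rw [h3, h1, Real.inv_rpow hb.le, ← Real.rpow_neg hb.le]

/-- Classical Hardy inequality on `(0,∞)`: for nonnegative measurable
`f ∈ Lᵖ(0,∞)`, `p > 1`,
`∫₀^∞ ((1/x)∫₀ˣ f(t) dt)ᵖ dx ≤ (p/(p−1))ᵖ ∫₀^∞ f(x)ᵖ dx`. -/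
theorem hardy_inequality
    (p : ℝ) (hp : 1 < p)
    (f : ℝ → ℝ) (hmeas : Measurable f) (hf0 : ∀ x, 0 ≤ f x)
    (hLp : IntegrableOn (fun x => f x ^ p) (Set.Ioi (0:ℝ))) :
    (∫ x in Set.Ioi (0:ℝ), ((1/x) * ∫ t in Set.Ioc (0:ℝ) x, f t) ^ p)
      ≤ (p/(p-1)) ^ p * ∫ x in Set.Ioi (0:ℝ), f x ^ p := by
  have hp0 : (0:ℝ) < p := by linarith
  set g : ℝ → ℝ≥0∞ := fun t => ENNReal.ofReal (f t) with hgdef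
  have hg : Measurable g := ENNReal.measurable_ofReal.comp hmeas
  have core := hardy_core p hp g hg
  -- f is integrable on each Ioc 0 x
  have hfint : ∀ x : ℝ, 0 < x → IntegrableOn f (Ioc 0 x) := by
    intro x hx
    have hbnd : IntegrableOn (fun t => 1 + f t ^ p) (Ioc 0 x) := by
      refine (integrableOn_const measure_Ioc_lt_top.ne).add ?_
      exact hLp.mono_set Ioc_subset_Ioi_self
    refine Integrable.mono' hbnd hmeas.aestronglyMeasurable ?_
    refine Filter.Eventually.of_forall fun t => ?_
    rw [Real.norm_eq_abs, abs_of_nonneg (hf0 t)]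
    rcases le_or_gt (f t) 1 with h | h
    · have : (0:ℝ) ≤ f t ^ p := Real.rpow_nonneg (hf0 t) p
      linarith
    · have h2 : f t ^ (1:ℝ) ≤ f t ^ p := Real.rpow_le_rpow_of_exponent_le h.le hp.le
      rw [Real.rpow_one] at h2
      linarith
  -- identification of integrands
  have hIeq : ∀ x ∈ Ioi (0:ℝ),
      ENNReal.ofReal ((1/x * ∫ t in Ioc (0:ℝ) x, f t) ^ p)
        = (ENNReal.ofReal (1/x) * ∫⁻ t in Ioc (0:ℝ) x, g t) ^ p := by
    intro x hx
    rw [mem_Ioi] at hx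
    have h1 : ENNReal.ofReal (∫ t in Ioc (0:ℝ) x, f t) = ∫⁻ t in Ioc (0:ℝ) x, g t :=
      ofReal_integral_eq_lintegral_ofReal (hfint x hx) (Filter.Eventually.of_forall fun t => hf0 t)
    have hnn : (0:ℝ) ≤ 1/x * ∫ t in Ioc (0:ℝ) x, f t :=
      mul_nonneg (by positivity) (setIntegral_nonneg measurableSet_Ioc fun t _ => hf0 t)
    rw [← ENNReal.ofReal_rpow_of_nonneg hnn hp0.le,
      ENNReal.ofReal_mul (by positivity : (0:ℝ) ≤ 1/x), h1]
  -- measurability of x ↦ ∫⁻ t in Ioc 0 x, g t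
  have hmint : Measurable fun x : ℝ => ∫⁻ t in Ioc (0:ℝ) x, g t := by
    have hS : MeasurableSet {z : ℝ × ℝ | 0 < z.2 ∧ z.2 ≤ z.1} :=
      (measurableSet_lt measurable_const measurable_snd).inter
        (measurableSet_le measurable_snd measurable_fst)
    have h2 : Measurable fun z : ℝ × ℝ => if 0 < z.2 ∧ z.2 ≤ z.1 then g z.2 else 0 :=
      Measurable.ite hS (hg.comp measurable_snd) measurable_const
    have heq : (fun x : ℝ => ∫⁻ t in Ioc (0:ℝ) x, g t)
        = fun x : ℝ => ∫⁻ t, (if 0 < t ∧ t ≤ x then g t else 0) := by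
      funext x
      rw [← lintegral_indicator measurableSet_Ioc]
      exact lintegral_congr fun t => by simp [Set.indicator_apply, mem_Ioc]
    rw [heq]
    exact h2.lintegral_prod_right'
  have hψ : Measurable fun x : ℝ =>
      ((ENNReal.ofReal (1/x) * ∫⁻ t in Ioc (0:ℝ) x, g t) ^ p).toReal :=
    ENNReal.measurable_toReal.comp
      (((ENNReal.measurable_ofReal.comp (by fun_prop : Measurable fun x : ℝ => 1/x)).mul
        hmint).pow_const p)
  have hF0 : 0 ≤ᵐ[volume.restrict (Ioi (0:ℝ))]
      fun x => (1/x * ∫ t in Ioc (0:ℝ) x, f t) ^ p := by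
    filter_upwards [ae_restrict_mem measurableSet_Ioi] with x hx
    rw [mem_Ioi] at hx
    exact Real.rpow_nonneg
      (mul_nonneg (by positivity) (setIntegral_nonneg measurableSet_Ioc fun t _ => hf0 t)) p
  have hFmeas : AEStronglyMeasurable
      (fun x => (1/x * ∫ t in Ioc (0:ℝ) x, f t) ^ p) (volume.restrict (Ioi (0:ℝ))) := by
    refine hψ.aestronglyMeasurable.congr ?_
    filter_upwards [ae_restrict_mem measurableSet_Ioi] with x hx
    rw [← hIeq x hx, ENNReal.toReal_ofReal]
    have hx' : (0:ℝ) < x := hx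
    exact Real.rpow_nonneg
      (mul_nonneg (by positivity) (setIntegral_nonneg measurableSet_Ioc fun t _ => hf0 t)) p
  have hRlin : ∫⁻ x in Ioi (0:ℝ), g x ^ p
      = ENNReal.ofReal (∫ x in Ioi (0:ℝ), f x ^ p) := by
    rw [ofReal_integral_eq_lintegral_ofReal hLp
      (Filter.Eventually.of_forall fun x => Real.rpow_nonneg (hf0 x) p)]
    exact lintegral_congr fun x => ENNReal.ofReal_rpow_of_nonneg (hf0 x) hp0.le
  have hRfin : ∫⁻ x in Ioi (0:ℝ), g x ^ p ≠ ⊤ := by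
    rw [hRlin]; exact ENNReal.ofReal_ne_top
  have hR : ∫ x in Ioi (0:ℝ), f x ^ p = (∫⁻ x in Ioi (0:ℝ), g x ^ p).toReal := by
    rw [hRlin, ENNReal.toReal_ofReal
      (setIntegral_nonneg measurableSet_Ioi fun x _ => Real.rpow_nonneg (hf0 x) p)]
  rw [integral_eq_lintegral_of_nonneg_ae hF0 hFmeas, hR]
  have hLcongr : ∫⁻ x in Ioi (0:ℝ), ENNReal.ofReal ((1/x * ∫ t in Ioc (0:ℝ) x, f t) ^ p)
      = ∫⁻ x in Ioi (0:ℝ), (ENNReal.ofReal (1/x) * ∫⁻ t in Ioc (0:ℝ) x, g t) ^ p := by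
    refine lintegral_congr_ae ?_
    filter_upwards [ae_restrict_mem measurableSet_Ioi] with x hx using hIeq x hx
  rw [hLcongr]
  have hC : (0:ℝ) ≤ (p/(p-1)) ^ p := Real.rpow_nonneg (div_nonneg hp0.le (by linarith)) p
  have step := ENNReal.toReal_mono (ENNReal.mul_ne_top ENNReal.ofReal_ne_top hRfin) core
  rw [ENNReal.toReal_mul, ENNReal.toReal_ofReal hC] at step
  exact step
end

section
/- Let X be a random variable with piecewise constant density f(x) = Σ_{j=1}^n a_j 1_{[j−1, j)}(x), where a_j ≥ 0 and Σ a_j = 1. Then VJ(X) = (1/4)[Σ_{j=1}^n a_j³ − (Σ_{j=1}^n a_j²)²] and VJ^w(X) = (1/12)Σ_{j=1}^n (3j² − 3j + 1) a_j³ − ((1/4)Σ_{j=1}^n (2j−1) a_j²)². In particular, if a_j = 1/n for all j, then VJ(X) = 0 and VJ^w(X) = 1/48. -/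
open MeasureTheory

private lemma ind_disjoint' {j j' : ℕ} (h : j ≠ j') {x : ℝ}
    (hx : x ∈ Set.Ico ((j:ℝ) - 1) (j:ℝ)) : x ∉ Set.Ico ((j':ℝ) - 1) (j':ℝ) := by
  intro hx'
  rcases lt_or_gt_of_ne h with h | h
  · have hj : (j:ℝ) + 1 ≤ (j':ℝ) := by exact_mod_cast Nat.succ_le_of_lt h
    have := hx.2; have := hx'.1; linarith
  · have hj : (j':ℝ) + 1 ≤ (j:ℝ) := by exact_mod_cast Nat.succ_le_of_lt h
    have := hx.1; have := hx'.2; linarith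

private lemma pow_sum_indicator (n p : ℕ) (hp : p ≠ 0) (a : ℕ → ℝ) (x : ℝ) :
    (∑ j ∈ Finset.Icc 1 n,
        a j * Set.indicator (Set.Ico ((j:ℝ) - 1) (j:ℝ)) (fun _ => (1:ℝ)) x) ^ p
    = ∑ j ∈ Finset.Icc 1 n,
        (a j) ^ p * Set.indicator (Set.Ico ((j:ℝ) - 1) (j:ℝ)) (fun _ => (1:ℝ)) x := by
  by_cases h : ∃ j0 ∈ Finset.Icc 1 n, x ∈ Set.Ico ((j0:ℝ) - 1) (j0:ℝ)
  · obtain ⟨j0, hj0, hx⟩ := h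
    rw [Finset.sum_eq_single_of_mem j0 hj0
        (fun j hj hne => by
          rw [Set.indicator_of_notMem (ind_disjoint' hne.symm hx), mul_zero]),
      Finset.sum_eq_single_of_mem j0 hj0
        (fun j hj hne => by
          rw [Set.indicator_of_notMem (ind_disjoint' hne.symm hx), mul_zero]),
      Set.indicator_of_mem hx]
    ring
  · push_neg at h
    have hz : ∀ j ∈ Finset.Icc 1 n,
        Set.indicator (Set.Ico ((j:ℝ) - 1) (j:ℝ)) (fun _ => (1:ℝ)) x = 0 :=
      fun j hj => Set.indicator_of_notMem (h j hj) _
    rw [Finset.sum_eq_zero (fun j hj => by rw [hz j hj, mul_zero]),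
      Finset.sum_eq_zero (fun j hj => by rw [hz j hj, mul_zero]), zero_pow hp]

private lemma integral_g_pow (n p : ℕ) (hp : p ≠ 0) (a : ℕ → ℝ)
    (g : ℝ → ℝ) (hg : Continuous g) :
    ∫ x : ℝ, g x * (∑ j ∈ Finset.Icc 1 n,
        a j * Set.indicator (Set.Ico ((j:ℝ) - 1) (j:ℝ)) (fun _ => (1:ℝ)) x) ^ p
    = ∑ j ∈ Finset.Icc 1 n, (a j) ^ p * ∫ x in Set.Ico ((j:ℝ) - 1) (j:ℝ), g x := by
  have key : ∀ (j : ℕ) (x : ℝ),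
      g x * ((a j) ^ p * Set.indicator (Set.Ico ((j:ℝ) - 1) (j:ℝ)) (fun _ => (1:ℝ)) x)
      = (a j) ^ p * Set.indicator (Set.Ico ((j:ℝ) - 1) (j:ℝ)) g x := by
    intro j x
    by_cases hx : x ∈ Set.Ico ((j:ℝ) - 1) (j:ℝ)
    · rw [Set.indicator_of_mem hx, Set.indicator_of_mem hx]; ring
    · rw [Set.indicator_of_notMem hx, Set.indicator_of_notMem hx]; ring
  have hint : ∀ j : ℕ, Integrable
      (fun x => (a j) ^ p * Set.indicator (Set.Ico ((j:ℝ) - 1) (j:ℝ)) g x) := by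
    intro j
    exact (((hg.integrableOn_Icc).mono_set
      Set.Ico_subset_Icc_self).integrable_indicator measurableSet_Ico).const_mul _
  simp_rw [pow_sum_indicator n p hp a, Finset.mul_sum, key]
  rw [integral_finset_sum _ (fun j _ => hint j)]
  refine Finset.sum_congr rfl (fun j _ => ?_)
  rw [MeasureTheory.integral_const_mul, integral_indicator measurableSet_Ico]

private lemma setInt (g : ℝ → ℝ) (j : ℕ) (hj : 1 ≤ j) :
    ∫ x in Set.Ico ((j:ℝ) - 1) (j:ℝ), g x = ∫ x in ((j:ℝ) - 1)..(j:ℝ), g x := by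
  have h : (j:ℝ) - 1 ≤ (j:ℝ) := by linarith
  rw [MeasureTheory.integral_Ico_eq_integral_Ioo, ← MeasureTheory.integral_Ioc_eq_integral_Ioo,
    intervalIntegral.integral_of_le h]

private lemma sum_telescope_sq (n : ℕ) :
    ∑ j ∈ Finset.Icc 1 n, (2 * (j:ℝ) - 1) = (n:ℝ) ^ 2 := by
  induction n with
  | zero => simp
  | succ m ih =>
    rw [Finset.sum_Icc_succ_top (Nat.succ_le_succ (Nat.zero_le m)), ih]
    push_cast; ring

private lemma sum_telescope_cube (n : ℕ) :
    ∑ j ∈ Finset.Icc 1 n, (3 * (j:ℝ) ^ 2 - 3 * (j:ℝ) + 1) = (n:ℝ) ^ 3 := by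
  induction n with
  | zero => simp
  | succ m ih =>
    rw [Finset.sum_Icc_succ_top (Nat.succ_le_succ (Nat.zero_le m)), ih]
    push_cast; ring

/-- For the piecewise constant density `f(x) = Σ_{j=1}^n a_j 1_{[j−1,j)}(x)`
with `a_j ≥ 0`, `Σ a_j = 1`:
`VJ(X) = (1/4)[Σ a_j³ − (Σ a_j²)²]`,
`VJʷ(X) = (1/12)Σ (3j²−3j+1) a_j³ − ((1/4)Σ(2j−1)a_j²)²`;
in particular `a_j = 1/n` gives `VJ = 0` and `VJʷ = 1/48`. -/
theorem varextropy_piecewise_constant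
    (n : ℕ) (hn : 0 < n) (a : ℕ → ℝ)
    (ha0 : ∀ j ∈ Finset.Icc 1 n, 0 ≤ a j)
    (ha1 : ∑ j ∈ Finset.Icc 1 n, a j = 1) :
    ((1/4 : ℝ) * (∫ x : ℝ, (∑ j ∈ Finset.Icc 1 n,
          a j * Set.indicator (Set.Ico ((j:ℝ) - 1) (j:ℝ)) (fun _ => (1:ℝ)) x)^3)
        - ((1/2 : ℝ) * ∫ x : ℝ, (∑ j ∈ Finset.Icc 1 n,
            a j * Set.indicator (Set.Ico ((j:ℝ) - 1) (j:ℝ)) (fun _ => (1:ℝ)) x)^2)^2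
      = (1/4 : ℝ) * ((∑ j ∈ Finset.Icc 1 n, (a j)^3)
          - (∑ j ∈ Finset.Icc 1 n, (a j)^2)^2))
    ∧ ((1/4 : ℝ) * (∫ x : ℝ, x^2 * (∑ j ∈ Finset.Icc 1 n,
          a j * Set.indicator (Set.Ico ((j:ℝ) - 1) (j:ℝ)) (fun _ => (1:ℝ)) x)^3)
        - ((1/2 : ℝ) * ∫ x : ℝ, x * (∑ j ∈ Finset.Icc 1 n,
            a j * Set.indicator (Set.Ico ((j:ℝ) - 1) (j:ℝ)) (fun _ => (1:ℝ)) x)^2)^2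
      = (1/12 : ℝ) * (∑ j ∈ Finset.Icc 1 n, (3*(j:ℝ)^2 - 3*(j:ℝ) + 1) * (a j)^3)
          - ((1/4 : ℝ) * ∑ j ∈ Finset.Icc 1 n, (2*(j:ℝ) - 1) * (a j)^2)^2)
    ∧ ((∀ j ∈ Finset.Icc 1 n, a j = 1/(n:ℝ)) →
        ((1/4 : ℝ) * ((∑ j ∈ Finset.Icc 1 n, (a j)^3)
            - (∑ j ∈ Finset.Icc 1 n, (a j)^2)^2) = 0
          ∧ (1/12 : ℝ) * (∑ j ∈ Finset.Icc 1 n, (3*(j:ℝ)^2 - 3*(j:ℝ) + 1) * (a j)^3)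
              - ((1/4 : ℝ) * ∑ j ∈ Finset.Icc 1 n, (2*(j:ℝ) - 1) * (a j)^2)^2
            = 1/48)) := by
  -- values of the set integrals
  have int1 : ∀ j ∈ Finset.Icc 1 n,
      (∫ x in Set.Ico ((j:ℝ) - 1) (j:ℝ), (1:ℝ)) = 1 := by
    intro j hj
    rw [setInt _ j (Finset.mem_Icc.1 hj).1]
    simp
  have intx : ∀ j ∈ Finset.Icc 1 n,
      (∫ x in Set.Ico ((j:ℝ) - 1) (j:ℝ), x) = (2*(j:ℝ) - 1) / 2 := by
    intro j hj
    rw [setInt _ j (Finset.mem_Icc.1 hj).1, integral_id]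
    ring
  have intx2 : ∀ j ∈ Finset.Icc 1 n,
      (∫ x in Set.Ico ((j:ℝ) - 1) (j:ℝ), x^2) = (3*(j:ℝ)^2 - 3*(j:ℝ) + 1) / 3 := by
    intro j hj
    rw [setInt _ j (Finset.mem_Icc.1 hj).1, integral_pow]
    ring
  have e2 : (∫ x : ℝ, (∑ j ∈ Finset.Icc 1 n,
        a j * Set.indicator (Set.Ico ((j:ℝ) - 1) (j:ℝ)) (fun _ => (1:ℝ)) x)^2)
      = ∑ j ∈ Finset.Icc 1 n, (a j)^2 := by
    have := integral_g_pow n 2 (by norm_num) a (fun _ => (1:ℝ)) continuous_const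
    simp_rw [one_mul] at this
    rw [this]
    exact Finset.sum_congr rfl (fun j hj => by rw [int1 j hj, mul_one])
  have e3 : (∫ x : ℝ, (∑ j ∈ Finset.Icc 1 n,
        a j * Set.indicator (Set.Ico ((j:ℝ) - 1) (j:ℝ)) (fun _ => (1:ℝ)) x)^3)
      = ∑ j ∈ Finset.Icc 1 n, (a j)^3 := by
    have := integral_g_pow n 3 (by norm_num) a (fun _ => (1:ℝ)) continuous_const
    simp_rw [one_mul] at this
    rw [this]
    exact Finset.sum_congr rfl (fun j hj => by rw [int1 j hj, mul_one])
  have w2 : (∫ x : ℝ, x * (∑ j ∈ Finset.Icc 1 n,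
        a j * Set.indicator (Set.Ico ((j:ℝ) - 1) (j:ℝ)) (fun _ => (1:ℝ)) x)^2)
      = (1/2 : ℝ) * ∑ j ∈ Finset.Icc 1 n, (2*(j:ℝ) - 1) * (a j)^2 := by
    rw [integral_g_pow n 2 (by norm_num) a (fun x => x) continuous_id, Finset.mul_sum]
    exact Finset.sum_congr rfl (fun j hj => by rw [intx j hj]; ring)
  have w3 : (∫ x : ℝ, x^2 * (∑ j ∈ Finset.Icc 1 n,
        a j * Set.indicator (Set.Ico ((j:ℝ) - 1) (j:ℝ)) (fun _ => (1:ℝ)) x)^3)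
      = (1/3 : ℝ) * ∑ j ∈ Finset.Icc 1 n, (3*(j:ℝ)^2 - 3*(j:ℝ) + 1) * (a j)^3 := by
    rw [integral_g_pow n 3 (by norm_num) a (fun x => x^2) (continuous_pow 2), Finset.mul_sum]
    exact Finset.sum_congr rfl (fun j hj => by rw [intx2 j hj]; ring)
  refine ⟨by rw [e2, e3]; ring, by rw [w2, w3]; ring, fun hun => ?_⟩
  have hne : (n:ℝ) ≠ 0 := Nat.cast_ne_zero.2 hn.ne'
  have s2 : ∑ j ∈ Finset.Icc 1 n, (a j)^2 = 1/(n:ℝ) := by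
    rw [Finset.sum_congr rfl (fun j hj => by rw [hun j hj]), Finset.sum_const,
      Nat.card_Icc]
    field_simp
    rw [Nat.add_sub_cancel, nsmul_eq_mul]; field_simp
  have s3 : ∑ j ∈ Finset.Icc 1 n, (a j)^3 = 1/(n:ℝ)^2 := by
    rw [Finset.sum_congr rfl (fun j hj => by rw [hun j hj]), Finset.sum_const,
      Nat.card_Icc]
    field_simp
    rw [Nat.add_sub_cancel, nsmul_eq_mul]; field_simp
  have sw2 : ∑ j ∈ Finset.Icc 1 n, (2*(j:ℝ) - 1) * (a j)^2 = 1 := by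
    rw [Finset.sum_congr rfl (fun j hj => by rw [hun j hj]), ← Finset.sum_mul,
      sum_telescope_sq]
    field_simp
  have sw3 : ∑ j ∈ Finset.Icc 1 n, (3*(j:ℝ)^2 - 3*(j:ℝ) + 1) * (a j)^3 = 1 := by
    rw [Finset.sum_congr rfl (fun j hj => by rw [hun j hj]), ← Finset.sum_mul,
      sum_telescope_cube]
    field_simp
  refine ⟨?_, ?_⟩
  · rw [s2, s3]; field_simp; ring
  · rw [sw2, sw3]; norm_num
end

section
/- Let X have Beta(a,1) density f(x) = a x^{a−1} on (0,1) and Y have Beta(1,a) density g(y) = a(1−y)^{a−1} on (0,1), a > 1/2. Then the extropies coincide: J(X) = J(Y) = −a²/(2(2a−1)); and for a > 2/3 the varextropies coincide: VJ(X) = VJ(Y) = a³(a−1)²/(4(3a−2)(2a−1)²); but the weighted varextropies differ in general: VJ^w(X) = a²/48 while VJ^w(Y) = a²(5a²−5a+2)/(48(9a²−9a+2)(2a−1)²). -/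
open MeasureTheory

private lemma rpow_int01 (p : ℝ) (hp : -1 < p) :
    ∫ x in Set.Ioo (0:ℝ) 1, x ^ p = 1/(p+1) := by
  rw [← MeasureTheory.integral_Ioc_eq_integral_Ioo,
    ← intervalIntegral.integral_of_le zero_le_one,
    integral_rpow (Or.inl hp)]
  rw [Real.one_rpow, Real.zero_rpow (by linarith)]
  ring

private lemma rpow_intOn (p : ℝ) (hp : -1 < p) :
    IntegrableOn (fun x : ℝ => x ^ p) (Set.Ioo 0 1) volume := by
  rw [← intervalIntegrable_iff_integrableOn_Ioo_of_le zero_le_one]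
  exact intervalIntegral.intervalIntegrable_rpow' hp

private lemma reflect_int (g : ℝ → ℝ) :
    ∫ y in Set.Ioo (0:ℝ) 1, g (1 - y) = ∫ x in Set.Ioo (0:ℝ) 1, g x := by
  rw [← MeasureTheory.integral_Ioc_eq_integral_Ioo,
    ← MeasureTheory.integral_Ioc_eq_integral_Ioo,
    ← intervalIntegral.integral_of_le zero_le_one,
    ← intervalIntegral.integral_of_le zero_le_one]
  simpa using intervalIntegral.integral_comp_sub_left g 1

private lemma pow_rpow' {x : ℝ} (hx : 0 < x) (p : ℝ) (n : ℕ) :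
    (x ^ p) ^ n = x ^ (p * n) := by
  rw [← Real.rpow_natCast (x ^ p) n, ← Real.rpow_mul hx.le]

private lemma moment_ptwise (a : ℝ) (n k : ℕ) {x : ℝ} (hx : x ∈ Set.Ioo (0:ℝ) 1) :
    x ^ k * (a * x ^ (a-1)) ^ n = a ^ n * x ^ ((a-1)*n + k) := by
  rw [Real.rpow_add hx.1, mul_pow, pow_rpow' hx.1]
  have : x ^ ((k:ℝ)) = x ^ k := Real.rpow_natCast x k
  rw [this]; ring

private lemma moment_int (a : ℝ) (n : ℕ) (k : ℕ) (h : -1 < (a-1)*n + k) :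
    ∫ x in Set.Ioo (0:ℝ) 1, x ^ k * (a * x ^ (a-1)) ^ n
      = a ^ n / ((a-1)*n + k + 1) := by
  have : ∫ x in Set.Ioo (0:ℝ) 1, x ^ k * (a * x ^ (a-1)) ^ n
      = ∫ x in Set.Ioo (0:ℝ) 1, a ^ n * x ^ ((a-1)*n + k) := by
    apply setIntegral_congr_fun measurableSet_Ioo
    intro x hx
    exact moment_ptwise a n k hx
  rw [this, integral_const_mul, rpow_int01 _ h]
  ring

private lemma moment_intOn (a : ℝ) (n : ℕ) (k : ℕ) (h : -1 < (a-1)*n + k) :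
    IntegrableOn (fun x : ℝ => x ^ k * (a * x ^ (a-1)) ^ n) (Set.Ioo 0 1) volume := by
  have h1 : IntegrableOn (fun x : ℝ => a ^ n * x ^ ((a-1)*n + k)) (Set.Ioo 0 1) volume :=
    (rpow_intOn _ h).const_mul (a ^ n)
  exact IntegrableOn.congr_fun h1 (fun x hx => (moment_ptwise a n k hx).symm) measurableSet_Ioo

private lemma moment0_int (a : ℝ) (n : ℕ) (h : -1 < (a-1)*n) :
    ∫ x in Set.Ioo (0:ℝ) 1, (a * x ^ (a-1)) ^ n = a ^ n / ((a-1)*n + 1) := by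
  have := moment_int a n 0 (by simpa using h)
  simpa using this

/-- For `X ∼ Beta(a,1)` with density `f(x) = a x^(a−1)` and `Y ∼ Beta(1,a)` with
density `g(y) = a(1−y)^(a−1)` on `(0,1)`, `a > 1/2`: the extropies coincide,
`J(X) = J(Y) = −a²/(2(2a−1))`; for `a > 2/3` the varextropies coincide,
`VJ(X) = VJ(Y) = a³(a−1)²/(4(3a−2)(2a−1)²)`, while the weighted varextropies
differ: `VJʷ(X) = a²/48` and `VJʷ(Y) = a²(5a²−5a+2)/(48(9a²−9a+2)(2a−1)²)`. -/
theorem beta_extropy_varextropy (a : ℝ) (ha : 1/2 < a) :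
    ((-(1/2 : ℝ)) * (∫ x in Set.Ioo (0:ℝ) 1, (a * x ^ (a - 1))^2)
        = -a^2 / (2*(2*a - 1))
      ∧ (-(1/2 : ℝ)) * (∫ y in Set.Ioo (0:ℝ) 1, (a * (1 - y) ^ (a - 1))^2)
        = -a^2 / (2*(2*a - 1)))
    ∧ (2/3 < a →
      ((1/4 : ℝ) * (∫ x in Set.Ioo (0:ℝ) 1, (a * x ^ (a - 1))^3)
          - ((1/2 : ℝ) * ∫ x in Set.Ioo (0:ℝ) 1, (a * x ^ (a - 1))^2)^2
        = a^3 * (a - 1)^2 / (4*(3*a - 2)*(2*a - 1)^2)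
      ∧ (1/4 : ℝ) * (∫ y in Set.Ioo (0:ℝ) 1, (a * (1 - y) ^ (a - 1))^3)
          - ((1/2 : ℝ) * ∫ y in Set.Ioo (0:ℝ) 1, (a * (1 - y) ^ (a - 1))^2)^2
        = a^3 * (a - 1)^2 / (4*(3*a - 2)*(2*a - 1)^2)
      ∧ (1/4 : ℝ) * (∫ x in Set.Ioo (0:ℝ) 1, x^2 * (a * x ^ (a - 1))^3)
          - ((1/2 : ℝ) * ∫ x in Set.Ioo (0:ℝ) 1, x * (a * x ^ (a - 1))^2)^2
        = a^2 / 48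
      ∧ (1/4 : ℝ) * (∫ y in Set.Ioo (0:ℝ) 1, y^2 * (a * (1 - y) ^ (a - 1))^3)
          - ((1/2 : ℝ) * ∫ y in Set.Ioo (0:ℝ) 1, y * (a * (1 - y) ^ (a - 1))^2)^2
        = a^2 * (5*a^2 - 5*a + 2) / (48*(9*a^2 - 9*a + 2)*(2*a - 1)^2))) := by
  have ha0 : (0:ℝ) < a := by linarith
  have h2a : 2*a - 1 ≠ 0 := by linarith
  -- second moments (n = 2)
  have hX2 : ∫ x in Set.Ioo (0:ℝ) 1, (a * x ^ (a-1))^2 = a^2 / (2*a - 1) := by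
    have := moment0_int a 2 (by push_cast; linarith)
    rw [this]; congr 1; push_cast; ring
  have hY2 : ∫ y in Set.Ioo (0:ℝ) 1, (a * (1-y) ^ (a-1))^2
      = ∫ x in Set.Ioo (0:ℝ) 1, (a * x ^ (a-1))^2 :=
    reflect_int (fun x => (a * x ^ (a-1))^2)
  refine ⟨⟨?_, ?_⟩, ?_⟩
  · rw [hX2]; field_simp <;> ring_nf
  · rw [hY2, hX2]; field_simp <;> ring_nf
  intro ha3
  have h3a2 : 3*a - 2 ≠ 0 := by linarith
  have h3a1 : 3*a - 1 ≠ 0 := by linarith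
  have h2a' : 2*a ≠ 0 := by linarith
  have h3a : 3*a ≠ 0 := by linarith
  have h9 : 9*a^2 - 9*a + 2 ≠ 0 := by
    have : 9*a^2 - 9*a + 2 = (3*a-1)*(3*a-2) := by ring
    rw [this]; exact mul_ne_zero h3a1 h3a2
  -- third moments (n = 3)
  have hX3 : ∫ x in Set.Ioo (0:ℝ) 1, (a * x ^ (a-1))^3 = a^3 / (3*a - 2) := by
    have := moment0_int a 3 (by push_cast; linarith)
    rw [this]; congr 1; push_cast; ring
  have hY3 : ∫ y in Set.Ioo (0:ℝ) 1, (a * (1-y) ^ (a-1))^3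
      = ∫ x in Set.Ioo (0:ℝ) 1, (a * x ^ (a-1))^3 :=
    reflect_int (fun x => (a * x ^ (a-1))^3)
  -- weighted X moments
  have hwX3 : ∫ x in Set.Ioo (0:ℝ) 1, x^2 * (a * x ^ (a-1))^3 = a^3 / (3*a) := by
    have := moment_int a 3 2 (by push_cast; linarith)
    rw [this]; congr 1; push_cast; ring
  have hwX2 : ∫ x in Set.Ioo (0:ℝ) 1, x * (a * x ^ (a-1))^2 = a^2 / (2*a) := by
    have := moment_int a 2 1 (by push_cast; linarith)
    simp only [pow_one] at this
    rw [this]; congr 1; push_cast; ring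
  -- weighted Y moments via reflection
  have hwY3 : ∫ y in Set.Ioo (0:ℝ) 1, y^2 * (a * (1-y) ^ (a-1))^3
      = a^3/(3*a-2) - 2*(a^3/(3*a-1)) + a^3/(3*a) := by
    have hrefl : ∫ y in Set.Ioo (0:ℝ) 1, y^2 * (a * (1-y) ^ (a-1))^3
        = ∫ x in Set.Ioo (0:ℝ) 1, (1-x)^2 * (a * x ^ (a-1))^3 := by
      rw [← reflect_int (fun x => (1-x)^2 * (a * x ^ (a-1))^3)]
      congr 1; funext y; rw [sub_sub_cancel]
    have hsplit : ∫ x in Set.Ioo (0:ℝ) 1, (1-x)^2 * (a * x ^ (a-1))^3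
        = (∫ x in Set.Ioo (0:ℝ) 1, x^0 * (a * x ^ (a-1))^3)
          - 2 * (∫ x in Set.Ioo (0:ℝ) 1, x^1 * (a * x ^ (a-1))^3)
          + ∫ x in Set.Ioo (0:ℝ) 1, x^2 * (a * x ^ (a-1))^3 := by
      have i0 := moment_intOn a 3 0 (by push_cast; linarith)
      have i1 := moment_intOn a 3 1 (by push_cast; linarith)
      have i2 := moment_intOn a 3 2 (by push_cast; linarith)
      calc ∫ x in Set.Ioo (0:ℝ) 1, (1-x)^2 * (a * x ^ (a-1))^3
          = ∫ x in Set.Ioo (0:ℝ) 1,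
              (x^0 * (a * x ^ (a-1))^3 - 2 * (x^1 * (a * x ^ (a-1))^3)
                + x^2 * (a * x ^ (a-1))^3) := by
            apply setIntegral_congr_fun measurableSet_Ioo
            intro x _; simp only; ring
        _ = _ := by
            have i1' : IntegrableOn
                (fun x : ℝ => 2 * (x^1 * (a * x ^ (a-1))^3)) (Set.Ioo 0 1) volume :=
              i1.const_mul 2
            have i01 : IntegrableOn
                (fun x : ℝ => x^0 * (a * x ^ (a-1))^3 - 2 * (x^1 * (a * x ^ (a-1))^3))
                (Set.Ioo 0 1) volume := i0.sub i1'
            rw [integral_add i01 i2, integral_sub i0 i1', integral_const_mul]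
    rw [hrefl, hsplit,
      moment_int a 3 0 (by push_cast; linarith),
      moment_int a 3 1 (by push_cast; linarith),
      moment_int a 3 2 (by push_cast; linarith)]
    push_cast; ring_nf
  have hwY2 : ∫ y in Set.Ioo (0:ℝ) 1, y * (a * (1-y) ^ (a-1))^2
      = a^2/(2*a-1) - a^2/(2*a) := by
    have hrefl : ∫ y in Set.Ioo (0:ℝ) 1, y * (a * (1-y) ^ (a-1))^2
        = ∫ x in Set.Ioo (0:ℝ) 1, (1-x) * (a * x ^ (a-1))^2 := by
      rw [← reflect_int (fun x => (1-x) * (a * x ^ (a-1))^2)]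
      congr 1; funext y; rw [sub_sub_cancel]
    have hsplit : ∫ x in Set.Ioo (0:ℝ) 1, (1-x) * (a * x ^ (a-1))^2
        = (∫ x in Set.Ioo (0:ℝ) 1, x^0 * (a * x ^ (a-1))^2)
          - ∫ x in Set.Ioo (0:ℝ) 1, x^1 * (a * x ^ (a-1))^2 := by
      have i0 := moment_intOn a 2 0 (by push_cast; linarith)
      have i1 := moment_intOn a 2 1 (by push_cast; linarith)
      calc ∫ x in Set.Ioo (0:ℝ) 1, (1-x) * (a * x ^ (a-1))^2
          = ∫ x in Set.Ioo (0:ℝ) 1,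
              (x^0 * (a * x ^ (a-1))^2 - x^1 * (a * x ^ (a-1))^2) := by
            apply setIntegral_congr_fun measurableSet_Ioo
            intro x _; simp only; ring
        _ = _ := integral_sub i0 i1
    rw [hrefl, hsplit,
      moment_int a 2 0 (by push_cast; linarith),
      moment_int a 2 1 (by push_cast; linarith)]
    push_cast; ring_nf
  have h3a2' : a*3 - 2 ≠ 0 := by linarith
  have h2a1' : a*2 - 1 ≠ 0 := by linarith
  have h3a1' : a*3 - 1 ≠ 0 := by linarith
  have h9' : a^2*9 - a*9 + 2 ≠ 0 := by
    rw [show a^2*9 - a*9 + 2 = 9*a^2 - 9*a + 2 by ring]; exact h9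
  refine ⟨?_, ?_, ?_, ?_⟩
  · rw [hX3, hX2]; field_simp <;> ring_nf
  · rw [hY3, hX3, hY2, hX2]; field_simp <;> ring_nf
  · rw [hwX3, hwX2]; field_simp <;> ring_nf
  · rw [hwY3, hwY2, show (9*a^2 - 9*a + 2) = (3*a-1)*(3*a-2) by ring]; field_simp <;> ring_nf
end
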